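/- arXiv:0908.1619 — 5 statements merged into one kernel-verified Lean document; each statement's English description precedes it below -/
import Mathlib

section
/- For every d ≥ 1 and every nonempty proper subset A of the vertices of the d-dimensional hypercube graph Q_d, the edge boundary satisfies |δ(A)| ≥ |A|·(2^d − |A|)/2^(d−1). -/
/-- The `d`-dimensional hypercube graph: vertices are functions `Fin d → Bool`,
adjacent iff they differ in exactly one coordinate. -/
def cubeGraph (d : ℕ) : SimpleGraph (Fin d → Bool) where
  Adj x y := (Finset.univ.filter fun i => x i ≠ y i).card = 1
  symm := by
    constructor
    intro x y h
    simpa only [ne_comm] using h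
  loopless := by
    constructor
    intro x h
    simp at h

/-- The edge boundary of a set `A` of vertices: edges of the graph with exactly one
endpoint in `A`. -/
def cubeEdgeBoundary (d : ℕ) (A : Finset (Fin d → Bool)) : Set (Sym2 (Fin d → Bool)) :=
  {e ∈ (cubeGraph d).edgeSet | ∃ x ∈ A, ∃ y ∉ A, e = s(x, y)}

/-!
Canonical paths. For `x ∈ A` and `y ∉ A`, walk from `x` to `y` switching coordinates
`0, 1, …, d - 1` in turn to those of `y`, and let `(u, w)` be the step leaving the last vertex
of the walk in `A`; it is a boundary edge in some direction `k`. The pair `(x, y)` is recovered from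
`(u, w)` and the vertex that agrees with `x` below `k` and with `y` from `k` on, whose `k`-th
coordinate is forced to be `w k`. So each boundary edge carries at most `2 ^ (d - 1)` of the
`|A| (2 ^ d - |A|)` paths.
-/

open Finset

instance (d : ℕ) : DecidableRel (cubeGraph d).Adj :=
  fun _ _ => inferInstanceAs (Decidable (_ = 1))

lemma card_filter_apply_eq_bool {ι : Type*} [Fintype ι] [DecidableEq ι] (k : ι) (b : Bool) :
    #{z : ι → Bool | z k = b} = 2 ^ (Fintype.card ι - 1) := by
  have := Fintype.card_filter_piFinset_const_eq_of_mem (univ : Finset Bool) k (mem_univ b)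
  rwa [Fintype.piFinset_univ, card_univ, Fintype.card_bool] at this

lemma filter_ne_update {ι α : Type*} [Fintype ι] [DecidableEq ι] [DecidableEq α] (u : ι → α)
    {k : ι} {b : α} (hb : u k ≠ b) :
    ({j | u j ≠ Function.update u k b j} : Finset ι) = {k} := by
  ext j
  by_cases hj : j = k
  · subst hj; simp [hb]
  · simp [hj]

namespace cubeGraph

variable {d : ℕ}

lemma adj_update (u : Fin d → Bool) {k : Fin d} {b : Bool} (hb : u k ≠ b) :
    (cubeGraph d).Adj u (Function.update u k b) := by
  change #{j | u j ≠ Function.update u k b j} = 1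
  rw [filter_ne_update u hb, card_singleton]

def path (x y : Fin d → Bool) (k : ℕ) : Fin d → Bool :=
  fun j => if (j : ℕ) < k then y j else x j

@[simp]
lemma path_zero (x y : Fin d → Bool) : path x y 0 = x := by
  funext j; simp [path]

@[simp]
lemma path_length (x y : Fin d → Bool) : path x y d = y := by
  funext j; simp [path]

lemma path_path_path (x y : Fin d → Bool) (k : ℕ) :
    path (path x y k) (path y x k) k = x := by
  funext j; by_cases hj : (j : ℕ) < k <;> simp [path, hj]

lemma path_succ (x y : Fin d → Bool) {i : ℕ} (hi : i < d) :
    path x y (i + 1) = Function.update (path x y i) ⟨i, hi⟩ (y ⟨i, hi⟩) := by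
  funext j
  by_cases hj : j = ⟨i, hi⟩
  · subst hj; simp [path]
  · have : (j : ℕ) ≠ i := fun h => hj (Fin.ext h)
    simp only [path, Function.update_of_ne hj]
    split_ifs <;> first | rfl | omega

variable {A : Finset (Fin d → Bool)} {x y : Fin d → Bool}

noncomputable def crossingIndex (A : Finset (Fin d → Bool)) (x y : Fin d → Bool) : ℕ :=
  Nat.findGreatest (fun k => path x y k ∈ A) d

lemma path_crossingIndex_mem (hx : x ∈ A) : path x y (crossingIndex A x y) ∈ A :=
  Nat.findGreatest_spec (P := fun k => path x y k ∈ A) (Nat.zero_le d) (by simpa)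

lemma crossingIndex_lt (hx : x ∈ A) (hy : y ∉ A) : crossingIndex A x y < d := by
  refine (Nat.findGreatest_le d).lt_of_ne fun h => hy ?_
  have := path_crossingIndex_mem (y := y) hx
  rwa [crossingIndex, h, path_length] at this

lemma path_crossingIndex_succ_notMem (hx : x ∈ A) (hy : y ∉ A) :
    path x y (crossingIndex A x y + 1) ∉ A :=
  Nat.findGreatest_is_greatest (lt_add_one _) (crossingIndex_lt hx hy)

lemma path_crossingIndex_apply_ne (hx : x ∈ A) (hy : y ∉ A) :
    path x y (crossingIndex A x y) ⟨_, crossingIndex_lt hx hy⟩ ≠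
      y ⟨_, crossingIndex_lt hx hy⟩ := by
  intro h
  apply path_crossingIndex_succ_notMem hx hy
  rw [path_succ x y (crossingIndex_lt hx hy), ← h, Function.update_eq_self]
  exact path_crossingIndex_mem hx

lemma crossingIndex_eq_of_filter_eq (hx : x ∈ A) (hy : y ∉ A) {k : Fin d}
    (hk : ({j | path x y (crossingIndex A x y) j ≠ path x y (crossingIndex A x y + 1) j} :
      Finset (Fin d)) = {k}) :
    crossingIndex A x y = k := by
  rw [path_succ x y (crossingIndex_lt hx hy),
    filter_ne_update _ (path_crossingIndex_apply_ne hx hy), singleton_inj] at hk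
  exact congrArg Fin.val hk

noncomputable def crossingEdge (A : Finset (Fin d → Bool)) (x y : Fin d → Bool) :
    (Fin d → Bool) × (Fin d → Bool) :=
  (path x y (crossingIndex A x y), path x y (crossingIndex A x y + 1))

def boundaryPairs (A : Finset (Fin d → Bool)) : Finset ((Fin d → Bool) × (Fin d → Bool)) :=
  {p ∈ A ×ˢ Aᶜ | (cubeGraph d).Adj p.1 p.2}

lemma crossingEdge_mem_boundaryPairs (hx : x ∈ A) (hy : y ∉ A) :
    crossingEdge A x y ∈ boundaryPairs A := by
  refine mem_filter.2 ⟨mem_product.2 ⟨path_crossingIndex_mem hx,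
    mem_compl.2 (path_crossingIndex_succ_notMem hx hy)⟩, ?_⟩
  rw [crossingEdge, path_succ x y (crossingIndex_lt hx hy)]
  exact adj_update _ (path_crossingIndex_apply_ne hx hy)

lemma card_crossingEdge_fiber_le {u w : Fin d → Bool} (huw : (cubeGraph d).Adj u w) :
    #{p ∈ A ×ˢ Aᶜ | crossingEdge A p.1 p.2 = (u, w)} ≤ 2 ^ (d - 1) := by
  obtain ⟨k, hk⟩ := card_eq_one.1 huw
  have hfiber : ∀ p ∈ ({p ∈ A ×ˢ Aᶜ | crossingEdge A p.1 p.2 = (u, w)} : Finset _),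
      path p.1 p.2 k = u ∧ path p.1 p.2 (k + 1) = w := by
    intro p hp
    obtain ⟨hp, he⟩ := mem_filter.1 hp
    obtain ⟨hx, hy⟩ := mem_product.1 hp
    obtain ⟨hu, hw⟩ : path p.1 p.2 _ = u ∧ path p.1 p.2 _ = w := Prod.ext_iff.1 he
    have hi := crossingIndex_eq_of_filter_eq hx (mem_compl.1 hy) (by rw [← hk, hu, hw])
    exact ⟨hi ▸ hu, hi ▸ hw⟩
  calc _ ≤ #{z : Fin d → Bool | z k = w k} := by
        refine card_le_card_of_injOn (fun p => path p.2 p.1 k) (fun p hp => ?_) ?_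
        · simp [← (hfiber p hp).2, path]
        · intro p hp q hq hpq
          dsimp only at hpq
          ext1
          · rw [← path_path_path p.1 p.2 k, ← path_path_path q.1 q.2 k, (hfiber p hp).1,
              (hfiber q hq).1, hpq]
          · rw [← path_path_path p.2 p.1 k, ← path_path_path q.2 q.1 k, (hfiber p hp).1,
              (hfiber q hq).1, hpq]
    _ = 2 ^ (d - 1) := by rw [card_filter_apply_eq_bool, Fintype.card_fin]

theorem card_mul_card_compl_le (A : Finset (Fin d → Bool)) :
    #A * #Aᶜ ≤ 2 ^ (d - 1) * #(boundaryPairs A) := by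
  rw [← card_product]
  refine card_le_mul_card_image_of_maps_to (f := fun p => crossingEdge A p.1 p.2)
    (fun p hp => ?_) _ ?_
  · obtain ⟨hx, hy⟩ := mem_product.1 hp
    exact crossingEdge_mem_boundaryPairs hx (mem_compl.1 hy)
  · rintro ⟨u, w⟩ he
    exact card_crossingEdge_fiber_le (mem_filter.1 he).2

theorem card_boundaryPairs_le_ncard (A : Finset (Fin d → Bool)) :
    #(boundaryPairs A) ≤ (cubeEdgeBoundary d A).ncard := by
  rw [Set.ncard_eq_toFinset_card _ (Set.toFinite _)]
  refine card_le_card_of_injOn (fun p => s(p.1, p.2)) (fun p hp => ?_) fun p hp q hq hpq => ?_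
  · obtain ⟨hp, hadj⟩ := mem_filter.1 hp
    obtain ⟨hx, hy⟩ := mem_product.1 hp
    simpa using ⟨hadj, p.1, hx, p.2, mem_compl.1 hy, rfl⟩
  · obtain ⟨hp, -⟩ := mem_filter.1 hp
    obtain ⟨hq, -⟩ := mem_filter.1 hq
    rcases Sym2.eq_iff.1 hpq with ⟨h1, h2⟩ | ⟨h1, -⟩
    · exact Prod.ext h1 h2
    · exact absurd (h1 ▸ (mem_product.1 hp).1) (mem_compl.1 (mem_product.1 hq).2)

end cubeGraph

theorem hypercube_edge_boundary_lower_bound_general (d : ℕ)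
    (A : Finset (Fin d → Bool)) :
    (A.card : ℝ) * ((2 : ℝ) ^ d - A.card) / (2 : ℝ) ^ (d - 1)
      ≤ ((cubeEdgeBoundary d A).ncard : ℝ) := by
  have hcount : #A * (2 ^ d - #A) ≤ 2 ^ (d - 1) * (cubeEdgeBoundary d A).ncard :=
    calc #A * (2 ^ d - #A) = #A * #Aᶜ := by simp [card_compl]
      _ ≤ 2 ^ (d - 1) * #(cubeGraph.boundaryPairs A) := cubeGraph.card_mul_card_compl_le A
      _ ≤ _ := Nat.mul_le_mul_left _ (cubeGraph.card_boundaryPairs_le_ncard A)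
  have hA : #A ≤ 2 ^ d := by simpa using card_le_univ A
  have hcount_real := (Nat.cast_le (α := ℝ)).2 hcount
  push_cast [Nat.cast_sub hA] at hcount_real
  rw [div_le_iff₀ (by positivity)]
  linarith

/-- For every `d ≥ 1` and every nonempty proper subset `A` of the vertices of the
`d`-dimensional hypercube graph, `|δ(A)| ≥ |A| · (2 ^ d − |A|) / 2 ^ (d − 1)`. -/
theorem hypercube_edge_boundary_lower_bound (d : ℕ) (hd : 1 ≤ d)
    (A : Finset (Fin d → Bool)) (hne : A.Nonempty) (hproper : A ≠ Finset.univ) :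
    (A.card : ℝ) * ((2 : ℝ) ^ d - A.card) / (2 : ℝ) ^ (d - 1)
      ≤ ((cubeEdgeBoundary d A).ncard : ℝ) :=
  hypercube_edge_boundary_lower_bound_general d A
end

section
/- (Cutset connectedness.) Let P ⊆ ℝ^d be a polytope, let f : ℝ^d → ℝ be a linear functional and c ∈ ℝ. If the set C of extreme points v of P with f(v) > c is nonempty, then C induces a connected subgraph of the graph G_P of P. -/
open Set

/-!
Perturb `f` to a functional `g` that is injective on the vertices and still strictly increasing
along `f`. Every vertex `v` other than the `g`-maximum then has a neighbour `w` with `g v < g w`: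
take a functional `h` exposing `v` and lower `t` in `g + t • h` from `∞` until a first vertex `w`
ties with `v`; for generic `h` that vertex is unique and `g + t • h` exposes the edge `[v, w]`.
Climbing such edges from a vertex of `C` never decreases `f`, so it stays in `C` and reaches the
`g`-maximum.
-/

def polytopeGraph {d : ℕ} (P : Set (Fin d → ℝ)) : SimpleGraph (Fin d → ℝ) where
  Adj u v := u ≠ v ∧ u ∈ P.extremePoints ℝ ∧ v ∈ P.extremePoints ℝ ∧
    IsExposed ℝ P (segment ℝ u v)
  symm := ⟨by
    rintro u v ⟨h1, h2, h3, h4⟩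
    exact ⟨h1.symm, h3, h2, by rwa [segment_symm]⟩⟩
  loopless := ⟨fun u h => h.1 rfl⟩

section
variable {𝕜 E : Type*} [Field 𝕜] [LinearOrder 𝕜] [IsStrictOrderedRing 𝕜] [AddCommGroup E]
  [Module 𝕜 E]

lemma smul_sub_ne_smul_sub_of_mem_extremePoints {P : Set E} {v x y : E}
    (hv : v ∈ P.extremePoints 𝕜) (hx : x ∈ P.extremePoints 𝕜) (hy : y ∈ P.extremePoints 𝕜)
    (hxv : x ≠ v) (hyv : y ≠ v) (hxy : x ≠ y) {α β : 𝕜} (hα : 0 < α) (hβ : 0 < β) :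
    α • (x - v) ≠ β • (y - v) := by
  wlog hαβ : α ≤ β generalizing x y α β
  · exact fun h ↦ this hy hx hyv hxv hxy.symm hβ hα (le_of_not_ge hαβ) h.symm
  intro h
  rcases hαβ.lt_or_eq with hlt | rfl
  · have hy_eq : (1 - α / β) • v + (α / β) • x = y := by
      have : β • y = β • ((1 - α / β) • v + (α / β) • x) := by
        rw [smul_add, smul_smul, smul_smul, mul_sub, mul_one, mul_div_cancel₀ _ hβ.ne']
        linear_combination (norm := module) -h
      exact (smul_right_injective E hβ.ne' this).symm
    have hseg : y ∈ openSegment 𝕜 v x :=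
      ⟨1 - α / β, α / β, by rw [sub_pos, div_lt_one hβ]; exact hlt, div_pos hα hβ, by ring,
        hy_eq⟩
    exact hyv (hy.2 hv.1 hx.1 hseg).symm
  · exact hxy (by simpa using smul_right_injective E hα.ne' h)

end

section
variable {E : Type*} [NormedAddCommGroup E] [NormedSpace ℝ E]

lemma dense_setOf_apply_ne_zero {z : E} (hz : z ≠ 0) : Dense {g : E →L[ℝ] ℝ | g z ≠ 0} := by
  have hker : interior (LinearMap.ker (ContinuousLinearMap.apply ℝ ℝ z : (E →L[ℝ] ℝ) →ₗ[ℝ] ℝ) :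
      Set (E →L[ℝ] ℝ)) = ∅ := by
    by_contra h
    obtain ⟨g, hg⟩ := exists_dual_vector ℝ z (norm_ne_zero_iff.2 hz)
    have := (Submodule.eq_top_of_nonempty_interior' _ (nonempty_iff_ne_empty.2 h)).ge
      (Submodule.mem_top (x := g))
    simp_all
  convert interior_eq_empty_iff_dense_compl.1 hker using 1
  ext g
  simp

lemma IsOpen.exists_mem_forall_apply_ne_zero {U : Set (E →L[ℝ] ℝ)} (hU : IsOpen U)
    (hne : U.Nonempty) {Z : Set E} (hZ : Z.Finite) : ∃ g ∈ U, ∀ z ∈ Z, z ≠ 0 → g z ≠ 0 := by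
  have hdense : Dense (⋂ z ∈ Z \ {0}, {g : E →L[ℝ] ℝ | g z ≠ 0}) :=
    dense_biInter_of_isOpen (fun z _ ↦ isOpen_ne_fun (continuous_eval_const z) continuous_const)
      (hZ.sdiff).countable (fun z hz ↦ dense_setOf_apply_ne_zero hz.2)
  obtain ⟨g, hgU, hg⟩ := hdense.inter_open_nonempty U hU hne
  simp only [mem_iInter] at hg
  exact ⟨g, hgU, fun z hz hz0 ↦ hg z ⟨hz, hz0⟩⟩

lemma Set.Finite.exists_forall_lt_of_mem_extremePoints_convexHull {T : Set E} (hT : T.Finite) {v : E}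
    (hv : v ∈ (convexHull ℝ T).extremePoints ℝ) : ∃ h : E →L[ℝ] ℝ, ∀ u ∈ T, u ≠ v → h u < h v := by
  have hvT : v ∉ convexHull ℝ (T \ {v}) := fun hmem ↦
    ((convex_convexHull ℝ T).mem_extremePoints_iff_mem_sdiff_convexHull_sdiff.1 hv).2
      (convexHull_mono (sdiff_subset_sdiff_left (subset_convexHull ℝ T)) hmem)
  obtain ⟨h, r, hlt, hr⟩ := geometric_hahn_banach_closed_point (convex_convexHull ℝ _)
    (hT.sdiff.isClosed_convexHull ℝ) hvT
  exact ⟨h, fun u hu huv ↦ (hlt u (subset_convexHull ℝ _ ⟨hu, huv⟩)).trans hr⟩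

lemma Set.Finite.isExposed_convexHull_segment {T : Set E} (hT : T.Finite) (ψ : E →L[ℝ] ℝ) {v w : E}
    (hv : v ∈ T) (hw : w ∈ T) (hwv : ψ w = ψ v) (hlt : ∀ x ∈ T, x ≠ v → x ≠ w → ψ x < ψ v) :
    IsExposed ℝ (convexHull ℝ T) (segment ℝ v w) := by
  set F := ψ.toExposed (convexHull ℝ T)
  have hF : IsExposed ℝ (convexHull ℝ T) F := ContinuousLinearMap.toExposed.isExposed
  have hFconv : Convex ℝ F := hF.convex (convex_convexHull ℝ T)
  have hle : ∀ y ∈ convexHull ℝ T, ψ y ≤ ψ v :=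
    convexHull_min (fun x hx ↦ show ψ x ≤ ψ v by
        by_cases hxv : x = v; · exact hxv ▸ le_rfl
        by_cases hxw : x = w; · exact hxw ▸ hwv.le
        exact (hlt x hx hxv hxw).le)
      (convex_halfSpace_le ψ.toLinearMap.isLinear (ψ v))
  have hvF : v ∈ F := ⟨subset_convexHull ℝ T hv, hle⟩
  have hwF : w ∈ F := ⟨subset_convexHull ℝ T hw, hwv ▸ hle⟩
  have hext : F.extremePoints ℝ ⊆ {v, w} := by
    intro x hx
    have hxT : x ∈ T := extremePoints_convexHull_subset
      (hF.isExtreme.extremePoints_subset_extremePoints hx)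
    by_contra hvw
    simp only [mem_insert_iff, mem_singleton_iff, not_or] at hvw
    exact (hlt x hxT hvw.1 hvw.2).not_ge (hx.1.2 v hvF.1)
  have hFseg : F ⊆ segment ℝ v w := by
    rw [← closure_convexHull_extremePoints (hF.isCompact (hT.isCompact_convexHull ℝ)) hFconv,
      ← convexHull_pair]
    exact closure_minimal (convexHull_mono hext) ((toFinite _).isClosed_convexHull ℝ)
  rwa [← hFseg.antisymm (hFconv.segment_subset hvF hwF)]

lemma Set.Finite.exists_lt_isExposed_segment_of_mul_ne {T : Set E} (hT : T.Finite)
    (g h : E →L[ℝ] ℝ) {v u : E} (hv : v ∈ T) (hu : u ∈ T) (hvu : g v < g u) (hh : ∀ x ∈ T, x ≠ v → h x < h v)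
    (hgen : ∀ x ∈ T, ∀ y ∈ T, g v < g x → g v < g y → x ≠ y →
      (g x - g v) * (h v - h y) ≠ (g y - g v) * (h v - h x)) :
    ∃ w ∈ T, g v < g w ∧ IsExposed ℝ (convexHull ℝ T) (segment ℝ v w) := by
  set A := {x ∈ T | g v < g x}
  have hden : ∀ x ∈ A, 0 < h v - h x := fun x hx ↦
    sub_pos.2 (hh x hx.1 (ne_of_apply_ne g hx.2.ne'))
  obtain ⟨w, hwA, hwmax⟩ := exists_max_image A (fun x ↦ (g x - g v) / (h v - h x))
    (hT.subset (sep_subset _ _)) ⟨u, hu, hvu⟩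
  set t := (g w - g v) / (h v - h w)
  have ht : 0 < t := div_pos (sub_pos.2 hwA.2) (hden w hwA)
  have htw : g w - g v = t * (h v - h w) := (div_mul_cancel₀ _ (hden w hwA).ne').symm
  refine ⟨w, hwA.1, hwA.2, hT.isExposed_convexHull_segment (g + t • h) hv hwA.1 ?_ ?_⟩
  · simp only [add_apply, smul_apply, smul_eq_mul]
    linarith
  intro x hx hxv hxw
  simp only [add_apply, smul_apply, smul_eq_mul]
  by_cases hgx : g v < g x
  · have hxA : x ∈ A := ⟨hx, hgx⟩
    have hrx : (g x - g v) / (h v - h x) < t := (hwmax x hxA).lt_of_ne fun heq ↦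
      hgen x hx w hwA.1 hgx hwA.2 hxw (by
        rw [div_eq_div_iff (hden x hxA).ne' (hden w hwA).ne'] at heq
        linear_combination heq)
    linarith [(div_lt_iff₀ (hden x hxA)).1 hrx]
  · linarith [mul_lt_mul_of_pos_left (hh x hx hxv) ht]

lemma Set.Finite.exists_lt_isExposed_segment {T : Set E} (hT : T.Finite)
    (hext : T ⊆ (convexHull ℝ T).extremePoints ℝ) (g : E →L[ℝ] ℝ) {v u : E} (hv : v ∈ T)
    (hu : u ∈ T) (hvu : g v < g u) :
    ∃ w ∈ T, g v < g w ∧ IsExposed ℝ (convexHull ℝ T) (segment ℝ v w) := by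
  set U := ⋂ x ∈ T \ {v}, {h : E →L[ℝ] ℝ | h x < h v}
  have hU : IsOpen U := hT.sdiff.isOpen_biInter fun x _ ↦
    isOpen_lt (continuous_eval_const x) (continuous_eval_const v)
  have hUne : U.Nonempty := by
    obtain ⟨h, hh⟩ := hT.exists_forall_lt_of_mem_extremePoints_convexHull (hext hv)
    exact ⟨h, mem_iInter₂.2 fun x hx ↦ hh x hx.1 hx.2⟩
  -- a tie between the ratios of `x` and `y` makes `h` vanish on the vector indexed by `(x, y)`
  obtain ⟨h, hhU, hhZ⟩ := hU.exists_mem_forall_apply_ne_zero hUne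
    (hT.image2 (fun x y ↦ (g x - g v) • (y - v) - (g y - g v) • (x - v)) hT)
  refine hT.exists_lt_isExposed_segment_of_mul_ne g h hv hu hvu
    (fun x hx hxv ↦ mem_iInter₂.1 hhU x ⟨hx, hxv⟩) fun x hx y hy hgx hgy hxy heq ↦ ?_
  have hxv : x ≠ v := ne_of_apply_ne g hgx.ne'
  have hyv : y ≠ v := ne_of_apply_ne g hgy.ne'
  refine hhZ _ (mem_image2_of_mem hx hy) (sub_ne_zero.2 (smul_sub_ne_smul_sub_of_mem_extremePoints
    (hext hv) (hext hy) (hext hx) hyv hxv hxy.symm (sub_pos.2 hgx) (sub_pos.2 hgy))) ?_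
  simp only [map_sub, map_smul, smul_eq_mul]
  linear_combination -heq

lemma Set.Finite.exists_injOn_lt_of_lt {T : Set E} (hT : T.Finite) (f : E →L[ℝ] ℝ) :
    ∃ g : E →L[ℝ] ℝ, (∀ x ∈ T, ∀ y ∈ T, f x < f y → g x < g y) ∧ InjOn g T := by
  set U := ⋂ p ∈ {p ∈ T ×ˢ T | f p.1 < f p.2}, {g : E →L[ℝ] ℝ | g p.1 < g p.2}
  have hU : IsOpen U := ((hT.prod hT).subset (sep_subset _ _)).isOpen_biInter fun p _ ↦
    isOpen_lt (continuous_eval_const p.1) (continuous_eval_const p.2)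
  have hfU : f ∈ U := mem_iInter₂.2 fun p hp ↦ hp.2
  obtain ⟨g, hgU, hg⟩ := hU.exists_mem_forall_apply_ne_zero ⟨f, hfU⟩ (hT.image2 (· - ·) hT)
  refine ⟨g, fun x hx y hy hxy ↦ mem_iInter₂.1 hgU (x, y) ⟨⟨hx, hy⟩, hxy⟩, fun x hx y hy hxy ↦ ?_⟩
  by_contra hne
  exact hg _ (mem_image2_of_mem hx hy) (sub_ne_zero.2 hne) (by rw [map_sub, hxy, sub_self])

end

lemma SimpleGraph.induce_connected_of_exists_adj_lt {V α : Type*} [LinearOrder α]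
    (G : SimpleGraph V) {s : Set V} (hs : s.Finite) (g : V → α) {m : V} (hm : m ∈ s)
    (hstep : ∀ x ∈ s, x ≠ m → ∃ y ∈ s, G.Adj x y ∧ g x < g y) : (G.induce s).Connected := by
  have : Finite s := hs.to_subtype
  refine (connected_iff_exists_forall_reachable _).2 ⟨⟨m, hm⟩, fun x ↦ ?_⟩
  by_contra hx
  obtain ⟨x, hxR, hxmax⟩ := exists_max_image {x | ¬ (G.induce s).Reachable ⟨m, hm⟩ x} (g ∘ (↑))
    (toFinite _) ⟨x, hx⟩
  have hxm : (x : V) ≠ m := by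
    rintro rfl
    exact hxR .rfl
  obtain ⟨y, hy, hxy, hgxy⟩ := hstep x x.2 hxm
  have hyR : (G.induce s).Reachable ⟨m, hm⟩ ⟨y, hy⟩ := by
    by_contra hyR
    exact (hxmax ⟨y, hy⟩ hyR).not_gt hgxy
  exact hxR (hyR.trans (SimpleGraph.Adj.reachable (G := G.induce s) hxy.symm))

/-- Cutset connectedness: if `P = conv S` is a polytope (`S` finite) and the set `C` of
extreme points `v` of `P` with `f v > c` is nonempty, then `C` induces a connected
subgraph of the graph of `P`. -/
theorem cutset_connected (d : ℕ) (S : Set (Fin d → ℝ)) (hS : S.Finite)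
    (f : (Fin d → ℝ) →ₗ[ℝ] ℝ) (c : ℝ)
    (hne : {v ∈ (convexHull ℝ S).extremePoints ℝ | c < f v}.Nonempty) :
    ((polytopeGraph (convexHull ℝ S)).induce
      {v ∈ (convexHull ℝ S).extremePoints ℝ | c < f v}).Connected := by
  set P := convexHull ℝ S
  set V := P.extremePoints ℝ
  have hV : V.Finite := hS.subset extremePoints_convexHull_subset
  have hPV : convexHull ℝ V = P := by
    rw [← (hV.isClosed_convexHull ℝ).closure_eq]
    exact closure_convexHull_extremePoints (hS.isCompact_convexHull ℝ) (convex_convexHull ℝ S)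
  obtain ⟨g, hfg, hg⟩ := hV.exists_injOn_lt_of_lt (LinearMap.toContinuousLinearMap f)
  have hf_le : ∀ x ∈ V, ∀ y ∈ V, g x ≤ g y → f x ≤ f y := fun x hx y hy hxy ↦
    le_of_not_gt fun h ↦ (hfg y hy x hx h).not_ge hxy
  obtain ⟨a, ha⟩ := hne
  obtain ⟨m, hmV, hmax⟩ := exists_max_image V g hV ⟨a, ha.1⟩
  refine SimpleGraph.induce_connected_of_exists_adj_lt _ (hV.subset (sep_subset _ _)) g
    ⟨hmV, ha.2.trans_le (hf_le a ha.1 m hmV (hmax a ha.1))⟩ fun x hx hxm ↦ ?_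
  have hgxm : g x < g m := (hmax x hx.1).lt_of_ne (hg.ne hx.1 hmV hxm)
  obtain ⟨w, hwV, hgxw, hexp⟩ := hV.exists_lt_isExposed_segment (hPV.symm ▸ subset_rfl) g
    hx.1 hmV hgxm
  refine ⟨w, ⟨hwV, hx.2.trans_le (hf_le x hx.1 w hwV hgxw.le)⟩,
    ⟨ne_of_apply_ne g hgxw.ne, hx.1, hwV, hPV ▸ hexp⟩, hgxw⟩
end

section
/- (Facet-free condition.) Let P ⊆ ℝ^d be a polytope whose affine span has dimension d, let f : ℝ^d → ℝ be a linear functional and c ∈ ℝ, and suppose P' = P ∩ {x : f(x) ≤ c} also has affine span of dimension d. If there is a facet F of P all of whose extreme points v satisfy f(v) > c (i.e., the cutset contains all vertices of a facet of P), then the number of facets of P' is at most the number of facets of P; in particular the cut does not increase the facet count to n+1 from n. -/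
open Set

/-- The dimension of the affine span of a set in `ℝ^d`. -/
noncomputable def affDim {d : ℕ} (s : Set (Fin d → ℝ)) : ℕ :=
  Module.finrank ℝ (vectorSpan ℝ s)

/-- The set of facets of a polytope `P` whose affine span has dimension `d`:
exposed faces whose affine span has dimension `d - 1`. -/
def facets {d : ℕ} (P : Set (Fin d → ℝ)) : Set (Set (Fin d → ℝ)) :=
  {F | IsExposed ℝ P F ∧ affDim F = d - 1}

/-!
A facet `F'` of `P' = P ∩ {f ≤ c}` either meets `{f < c}` or lies in the hyperplane `{f = c}`.
In the first case the functional exposing `F'` in `P'` is maximised over all of `P` on `F'`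
(slide from a point of `F'` towards any point of `P` until the segment leaves `P'`), so
`F' = G ∩ P'` for a facet `G` of `P`; and `G` is not the given facet `F`, which lies in `{f > c}`
because it is the convex hull of its extreme points. In the second case `F'` is the whole slice
`P' ∩ {f = c}`, as the slice has dimension below `d`; this single new facet is paid for by `F`.

The empty set has the dimension of a facet when `d ≤ 1`. If the given facet is empty, the face
of `P` on which `f` is maximal takes its place.
-/

section ExposedFacesOfPolytopes

variable {E : Type*} [AddCommGroup E] [Module ℝ E] [TopologicalSpace E] {S F : Set E}

lemma IsExposed.extremePoints_subset_of_convexHull (hF : IsExposed ℝ (convexHull ℝ S) F) :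
    F.extremePoints ℝ ⊆ S :=
  hF.isExtreme.extremePoints_subset_extremePoints.trans extremePoints_convexHull_subset

variable [T2Space E] [IsTopologicalAddGroup E] [ContinuousSMul ℝ E] [LocallyConvexSpace ℝ E]

lemma IsExposed.convexHull_extremePoints (hS : S.Finite) (hF : IsExposed ℝ (convexHull ℝ S) F) :
    convexHull ℝ (F.extremePoints ℝ) = F := by
  have hclosed := (hS.subset hF.extremePoints_subset_of_convexHull).isCompact_convexHull ℝ
  rw [← hclosed.isClosed.closure_eq]
  exact closure_convexHull_extremePoints (hF.isCompact (hS.isCompact_convexHull ℝ))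
    (hF.convex (convex_convexHull ℝ S))

lemma finite_setOf_isExposed_convexHull (hS : S.Finite) :
    {F | IsExposed ℝ (convexHull ℝ S) F}.Finite :=
  (hS.finite_subsets.image (convexHull ℝ)).subset fun _ hF =>
    ⟨_, hF.extremePoints_subset_of_convexHull, hF.convexHull_extremePoints hS⟩

end ExposedFacesOfPolytopes

lemma Convex.isMaxOn_of_isMaxOn_inter_halfspace {E : Type*} [AddCommGroup E] [Module ℝ E]
    {P : Set E} (hP : Convex ℝ P) {f l : E →ₗ[ℝ] ℝ} {c : ℝ} {x : E} (hxP : x ∈ P)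
    (hxc : f x < c) (hmax : IsMaxOn l (P ∩ {y | f y ≤ c}) x) : IsMaxOn l P x := by
  intro y hy
  by_cases hyc : f y ≤ c
  · exact hmax ⟨hy, hyc⟩
  have hxy : 0 < f y - f x := by linarith
  set t := (c - f x) / (f y - f x)
  have ht : t * (f y - f x) = c - f x := div_mul_cancel₀ _ hxy.ne'
  have ht0 : 0 < t := div_pos (by linarith) hxy
  have ht1 : t ≤ 1 := (div_le_one hxy).mpr (by linarith)
  have hz : l (x + t • (y - x)) ≤ l x :=
    hmax ⟨hP.add_smul_sub_mem hxP hy ⟨ht0.le, ht1⟩, by simp [ht]⟩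
  simp only [map_add, map_smul, map_sub, smul_eq_mul] at hz
  show l y ≤ l x
  nlinarith

lemma vectorSpan_le_ker_of_forall_eq {R M N : Type*} [Ring R] [AddCommGroup M] [Module R M]
    [AddCommGroup N] [Module R N] (l : M →ₗ[R] N) {s : Set M} {a : N}
    (hs : ∀ x ∈ s, l x = a) : vectorSpan R s ≤ LinearMap.ker l := by
  rw [vectorSpan_def, Submodule.span_le]
  rintro _ ⟨x, hx, y, hy, rfl⟩
  simp [hs x hx, hs y hy]

section AffDim

variable {d : ℕ}

lemma affDim_empty : affDim (∅ : Set (Fin d → ℝ)) = 0 := by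
  simp [affDim]

lemma affDim_mono {s t : Set (Fin d → ℝ)} (h : s ⊆ t) : affDim s ≤ affDim t :=
  Submodule.finrank_mono (vectorSpan_mono ℝ h)

lemma affDim_lt_of_forall_eq {s : Set (Fin d → ℝ)} {l : (Fin d → ℝ) →ₗ[ℝ] ℝ} (hl : l ≠ 0) {a : ℝ}
    (hs : ∀ x ∈ s, l x = a) : affDim s < d :=
  (Submodule.finrank_mono (vectorSpan_le_ker_of_forall_eq l hs)).trans_lt <|
    (Submodule.finrank_lt (LinearMap.ker_eq_top.not.mpr hl)).trans_eq (Module.finrank_fin_fun ℝ)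

lemma IsExposed.affDim_lt {A B : Set (Fin d → ℝ)} (hB : IsExposed ℝ A B) (hne : B.Nonempty)
    (hBA : B ≠ A) : affDim B < affDim A := by
  refine (affDim_mono hB.subset).lt_of_ne fun heq => hBA ?_
  obtain ⟨l, rfl⟩ := hB hne
  obtain ⟨x, hxA, hx⟩ := hne
  have hspan : vectorSpan ℝ A ≤ LinearMap.ker (l : (Fin d → ℝ) →ₗ[ℝ] ℝ) := by
    rw [← Submodule.eq_of_le_of_finrank_eq (vectorSpan_mono ℝ hB.subset) heq]
    exact vectorSpan_le_ker_of_forall_eq (l : (Fin d → ℝ) →ₗ[ℝ] ℝ)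
      fun y hy => le_antisymm (hx y hy.1) (hy.2 x hxA)
  refine Subset.antisymm hB.subset fun y hy => ⟨hy, fun z hz => ?_⟩
  have hxy : l (y - x) = 0 := hspan (vsub_mem_vectorSpan ℝ hy hxA)
  rw [map_sub, sub_eq_zero] at hxy
  exact hxy ▸ hx z hz

end AffDim

section Facets

variable {d : ℕ} {f : (Fin d → ℝ) →ₗ[ℝ] ℝ} {c : ℝ}

lemma facet_eq_inter_of_forall_eq {A F : Set (Fin d → ℝ)} (hF : F ∈ facets A) (hne : F.Nonempty)
    (hf : f ≠ 0) (hFc : ∀ x ∈ F, f x = c) : F = A ∩ {x | f x = c} := by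
  by_contra hF_ne
  have hexp : IsExposed ℝ (A ∩ {x | f x = c}) F :=
    hF.1.mono inter_subset_left fun x hx => ⟨hF.1.subset hx, hFc x hx⟩
  have hlt := hexp.affDim_lt hne hF_ne
  have hslice := affDim_lt_of_forall_eq hf fun x (hx : x ∈ A ∩ {x | f x = c}) => hx.2
  have := hF.2
  omega

lemma exists_facet_eq_inter_of_mem_of_lt {P F' : Set (Fin d → ℝ)} (hPconv : Convex ℝ P)
    (hP : affDim P = d) (hP' : affDim (P ∩ {x | f x ≤ c}) = d)
    (hF' : F' ∈ facets (P ∩ {x | f x ≤ c})) {x : Fin d → ℝ} (hx : x ∈ F') (hxc : f x < c) :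
    ∃ G ∈ facets P, F' = G ∩ (P ∩ {x | f x ≤ c}) := by
  obtain ⟨l, rfl⟩ := hF'.1 ⟨x, hx⟩
  have hmax : IsMaxOn l P x :=
    hPconv.isMaxOn_of_isMaxOn_inter_halfspace (l := (l : (Fin d → ℝ) →ₗ[ℝ] ℝ)) hx.1.1 hxc hx.2
  have hF'_eq : l.toExposed (P ∩ {x | f x ≤ c}) = l.toExposed P ∩ (P ∩ {x | f x ≤ c}) := by
    ext z
    exact ⟨fun hz => ⟨⟨hz.1.1, fun y hy => (hmax hy).trans (hz.2 x hx.1)⟩, hz.1⟩,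
      fun hz => ⟨hz.2, fun y hy => hz.1.2 y hy.1⟩⟩
  refine ⟨l.toExposed P, ⟨ContinuousLinearMap.toExposed.isExposed, ?_⟩, hF'_eq⟩
  have hge := affDim_mono (hF'_eq.trans_subset inter_subset_left)
  have hdim : affDim (l.toExposed (P ∩ {x | f x ≤ c})) = d - 1 := hF'.2
  by_cases hGP : l.toExposed P = P
  · rw [hGP, inter_eq_right.mpr inter_subset_left] at hF'_eq
    rw [hF'_eq, hP'] at hdim
    rw [hGP, hP]
    omega
  · have := ContinuousLinearMap.toExposed.isExposed.affDim_lt ⟨x, hx.1.1, hmax⟩ hGP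
    omega

lemma facets_inter_halfspace_subset {P F : Set (Fin d → ℝ)} (hPconv : Convex ℝ P)
    (hP : affDim P = d) (hP' : affDim (P ∩ {x | f x ≤ c}) = d)
    (hFne : F.Nonempty) (hFc : ∀ x ∈ F, c < f x) :
    facets (P ∩ {x | f x ≤ c}) ⊆
      insert (P ∩ {x | f x ≤ c} ∩ {x | f x = c})
        ((· ∩ (P ∩ {x | f x ≤ c})) '' (facets P \ {F})) := by
  intro F' hF'
  by_cases hlt : ∃ x ∈ F', f x < c
  · obtain ⟨x, hx, hxc⟩ := hlt
    obtain ⟨G, hG, rfl⟩ := exists_facet_eq_inter_of_mem_of_lt hPconv hP hP' hF' hx hxc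
    refine mem_insert_of_mem _ ⟨G, ⟨hG, fun hGF => ?_⟩, rfl⟩
    exact (hFc x (mem_singleton_iff.mp hGF ▸ hx.1)).not_gt hxc
  push Not at hlt
  have hlevel : ∀ x ∈ F', f x = c := fun x hx => le_antisymm (hF'.1.subset hx).2 (hlt x hx)
  rcases F'.eq_empty_or_nonempty with rfl | ⟨z, hz⟩
  · refine mem_insert_of_mem _ ⟨∅, ⟨⟨isExposed_empty, hF'.2⟩, fun hF_empty => ?_⟩, empty_inter _⟩
    exact hFne.ne_empty (mem_singleton_iff.mp hF_empty).symm
  obtain ⟨y, hy⟩ := hFne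
  have hf : f ≠ 0 := fun hf => (hFc y hy).ne' (by rw [← hlevel z hz]; simp [hf])
  exact Or.inl (facet_eq_inter_of_forall_eq hF' ⟨z, hz⟩ hf hlevel)

lemma ncard_facets_inter_halfspace_le {P F : Set (Fin d → ℝ)} (hfin : (facets P).Finite)
    (hPconv : Convex ℝ P) (hP : affDim P = d) (hP' : affDim (P ∩ {x | f x ≤ c}) = d)
    (hF : F ∈ facets P) (hFne : F.Nonempty) (hFc : ∀ x ∈ F, c < f x) :
    (facets (P ∩ {x | f x ≤ c})).ncard ≤ (facets P).ncard :=
  calc (facets (P ∩ {x | f x ≤ c})).ncard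
      ≤ (insert (P ∩ {x | f x ≤ c} ∩ {x | f x = c})
          ((· ∩ (P ∩ {x | f x ≤ c})) '' (facets P \ {F}))).ncard :=
        ncard_le_ncard (facets_inter_halfspace_subset hPconv hP hP' hFne hFc)
          ((hfin.sdiff.image _).insert _)
    _ ≤ ((· ∩ (P ∩ {x | f x ≤ c})) '' (facets P \ {F})).ncard + 1 := ncard_insert_le _ _
    _ ≤ (facets P \ {F}).ncard + 1 := Nat.add_le_add_right (ncard_image_le hfin.sdiff) 1
    _ = (facets P).ncard := ncard_sdiff_singleton_add_one hF hfin

lemma exists_facet_forall_lt_of_le_one {P : Set (Fin d → ℝ)} (hd : d ≤ 1) (hPc : IsCompact P)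
    (hP : affDim P = d) {x y : Fin d → ℝ} (hx : x ∈ P) (hxc : f x ≤ c) (hy : y ∈ P)
    (hyc : c < f y) : ∃ F ∈ facets P, F.Nonempty ∧ ∀ z ∈ F, c < f z := by
  set g := LinearMap.toContinuousLinearMap f
  obtain ⟨z, hzP, hz⟩ := hPc.exists_isMaxOn ⟨x, hx⟩ g.continuous.continuousOn
  have hgt : ∀ w ∈ g.toExposed P, c < f w := fun w hw => hyc.trans_le (hw.2 y hy)
  have hne : g.toExposed P ≠ P := fun h => (hgt x (h.ge hx)).not_ge hxc
  have := ContinuousLinearMap.toExposed.isExposed.affDim_lt ⟨z, hzP, hz⟩ hne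
  exact ⟨g.toExposed P, ⟨ContinuousLinearMap.toExposed.isExposed, by omega⟩, ⟨z, hzP, hz⟩, hgt⟩

end Facets

/-- Facet-free condition: let `P = conv S` be a polytope (`S` finite) whose affine span
has dimension `d`, and suppose `P' = P ∩ {x : f x ≤ c}` also has affine span of
dimension `d`. If there is a facet `F` of `P` all of whose extreme points `v` satisfy
`f v > c`, then the number of facets of `P'` is at most the number of facets of `P`. -/
theorem cut_containing_facet_does_not_increase_facet_count
    (d : ℕ) (S : Set (Fin d → ℝ)) (hS : S.Finite)
    (hP : affDim (convexHull ℝ S) = d)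
    (f : (Fin d → ℝ) →ₗ[ℝ] ℝ) (c : ℝ)
    (hP' : affDim (convexHull ℝ S ∩ {x | f x ≤ c}) = d)
    (F : Set (Fin d → ℝ)) (hF : F ∈ facets (convexHull ℝ S))
    (hcut : ∀ v ∈ F.extremePoints ℝ, c < f v) :
    (facets (convexHull ℝ S ∩ {x | f x ≤ c})).ncard ≤ (facets (convexHull ℝ S)).ncard := by
  have hfin : (facets (convexHull ℝ S)).Finite :=
    (finite_setOf_isExposed_convexHull hS).subset fun _ hG => hG.1
  have hconv := convex_convexHull ℝ S
  rcases (convexHull ℝ S ∩ {x | f x ≤ c}).eq_empty_or_nonempty with hempty | ⟨x, hxP, hxc⟩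
  · rw [hempty]
    calc (facets (∅ : Set (Fin d → ℝ))).ncard
        ≤ ({∅} : Set (Set (Fin d → ℝ))).ncard :=
          ncard_le_ncard (fun _ hG => subset_empty_iff.mp hG.1.subset) (finite_singleton _)
      _ ≤ (facets (convexHull ℝ S)).ncard :=
          (ncard_singleton _).trans_le ((ncard_pos hfin).mpr ⟨F, hF⟩)
  rcases F.eq_empty_or_nonempty with rfl | hFne
  · by_cases hPc : convexHull ℝ S ⊆ {x | f x ≤ c}
    · rw [inter_eq_left.mpr hPc]
    obtain ⟨y, hy, hyc⟩ := not_subset.mp hPc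
    have hd : d ≤ 1 := by have := hF.2; rw [affDim_empty] at this; omega
    obtain ⟨F₀, hF₀, hF₀ne, hF₀c⟩ := exists_facet_forall_lt_of_le_one hd
      (hS.isCompact_convexHull ℝ) hP hxP hxc hy (not_le.mp hyc)
    exact ncard_facets_inter_halfspace_le hfin hconv hP hP' hF₀ hF₀ne hF₀c
  refine ncard_facets_inter_halfspace_le hfin hconv hP hP' hF hFne fun x hx => ?_
  rw [← hF.1.convexHull_extremePoints hS] at hx
  exact convexHull_min hcut (convex_halfSpace_gt f.isLinear c) hx
end

section
/- (New vertices lie on edges of P.) Let P ⊆ ℝ^d be a polytope, f : ℝ^d → ℝ a linear functional and c ∈ ℝ such that no extreme point u of P satisfies f(u) = c. Let P' = P ∩ {x : f(x) ≤ c}. Then every extreme point v of P' that is not an extreme point of P lies on an edge of P: there exist extreme points u, w of P with f(u) < c < f(w) such that the segment [u,w] is an edge of P and v lies in the open segment between u and w (and f(v) = c). -/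
open Set

/-!
Let `G = conv T` be an exposed face of `P = conv S` that contains `v` and is minimal with this
property. Then `v` lies in the relative interior of `G`: otherwise a functional supporting `G` at
`v` cuts out a smaller exposed face of `G` containing `v`, and since `S` is finite an exposed face
of an exposed face of `P` is exposed in `P` (perturb the first functional by a small multiple of
the second). As `v` is an extreme point of `P ∩ {f ≤ c}`, it cannot move inside `G` in a direction
killed by `f`, so `f` is injective on `G` and `G` is the segment joining the minimizer `u` and the
maximizer `w` of `f` on `G`. This segment is not a point because `v` is not a vertex of `P`; so `v`
can move inside `G`, which forces `f v = c`, and genericity gives `f u < c < f w`.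
-/

open Filter Topology
open scoped Pointwise

theorem Set.Finite.exists_pos_forall_add_mul_lt {ι : Type*} {s : Set ι} (hs : s.Finite)
    (a b : ι → ℝ) (c : ℝ) : ∃ ε > 0, ∀ i ∈ s, a i < c → a i + ε * b i < c := by
  have : ∀ᶠ ε in 𝓝 (0 : ℝ), ∀ i ∈ s, a i < c → a i + ε * b i < c := by
    refine (eventually_all_finite hs).2 fun i _ => ?_
    by_cases h : a i < c
    · have : Tendsto (fun ε : ℝ => a i + ε * b i) (𝓝 0) (𝓝 (a i)) := by
        simpa using (tendsto_const_nhds (x := a i)).add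
          ((tendsto_id (x := 𝓝 (0 : ℝ))).mul_const (b i))
      exact (this.eventually (gt_mem_nhds h)).mono fun _ h' _ => h'
    · exact .of_forall fun _ h' => absurd h' h
  obtain ⟨ε, hε, hε₀⟩ :=
    ((this.filter_mono nhdsWithin_le_nhds).and (self_mem_nhdsWithin (s := Ioi 0))).exists
  exact ⟨ε, hε₀, hε⟩

section Module

variable {E : Type*} [AddCommGroup E] [Module ℝ E]

theorem mem_convexHull_setOf_eq_of_forall_le {A : Set E} {l : E →ₗ[ℝ] ℝ} {m : ℝ}
    (hA : ∀ a ∈ A, l a ≤ m) {x : E} (hx : x ∈ convexHull ℝ A) (hlx : l x = m) :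
    x ∈ convexHull ℝ {a ∈ A | l a = m} := by
  set F := convexHull ℝ {a ∈ A | l a = m}
  have hF : ∀ y ∈ F, l y = m :=
    fun y hy => convexHull_min (fun a ha => ha.2) (convex_hyperplane l.isLinear m) hy
  suffices convexHull ℝ A ⊆ {y | l y < m} ∪ F by
    simpa [hlx] using this hx
  refine convexHull_min (fun a ha => ?_) (convex_iff_openSegment_subset.2 ?_)
  · rcases (hA a ha).lt_or_eq with h | h
    exacts [Or.inl h, Or.inr (subset_convexHull ℝ _ ⟨ha, h⟩)]
  have hle : ∀ y ∈ {y | l y < m} ∪ F, l y ≤ m := by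
    rintro y (hy | hy)
    exacts [le_of_lt hy, (hF y hy).le]
  rintro y hy z hz _ ⟨a, b, ha, hb, hab, rfl⟩
  by_cases hlt : l (a • y + b • z) < m
  · exact Or.inl hlt
  have hdef : m - l (a • y + b • z) = a * (m - l y) + b * (m - l z) := by
    simp only [map_add, map_smul, smul_eq_mul]; linear_combination (-m) * hab
  have hy' : l y = m := by nlinarith [mul_nonneg hb.le (sub_nonneg.2 (hle z hz)), hle y hy]
  have hz' : l z = m := by nlinarith [mul_nonneg ha.le (sub_nonneg.2 (hle y hy)), hle z hz]
  exact Or.inr <| convex_convexHull ℝ _ (hy.resolve_left hy'.not_lt) (hz.resolve_left hz'.not_lt)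
    ha.le hb.le hab

theorem eq_zero_of_mem_extremePoints_of_eventually {A : Set E} {v e : E}
    (hv : v ∈ A.extremePoints ℝ) (he : ∀ᶠ δ in 𝓝 (0 : ℝ), v + δ • e ∈ A) : e = 0 := by
  have hsymm : ∀ᶠ δ in 𝓝 (0 : ℝ), v + δ • e ∈ A ∧ v + (-δ) • e ∈ A :=
    he.and ((continuous_neg.tendsto' 0 0 neg_zero).eventually he)
  obtain ⟨δ, ⟨h₁, h₂⟩, hδ⟩ :=
    ((hsymm.filter_mono nhdsWithin_le_nhds).and (self_mem_nhdsWithin (s := Ioi 0))).exists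
  have hmid : v ∈ openSegment ℝ (v + δ • e) (v + (-δ) • e) :=
    ⟨1 / 2, 1 / 2, by norm_num, by norm_num, by norm_num, by module⟩
  have := hv.2 h₁ h₂ hmid
  rwa [add_eq_left, smul_eq_zero, or_iff_right hδ.ne'] at this

theorem eq_zero_of_mem_extremePoints_inter_halfSpace {P G : Set E} {f : E →ₗ[ℝ] ℝ} {c : ℝ}
    {v e : E} (hv : v ∈ (P ∩ {x | f x ≤ c}).extremePoints ℝ) (hGP : G ⊆ P)
    (he : ∀ᶠ δ in 𝓝 (0 : ℝ), v + δ • e ∈ G) (hfe : f e = 0 ∨ f v < c) : e = 0 := by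
  refine eq_zero_of_mem_extremePoints_of_eventually hv
    ((he.and ?_).mono fun _ h => ⟨hGP h.1, h.2⟩)
  have hlin : ∀ δ : ℝ, f (v + δ • e) = f v + δ * f e := fun δ => by simp
  rcases hfe with hfe | hlt
  · exact .of_forall fun δ => by simpa [hlin, hfe] using hv.1.2
  · have : Tendsto (fun δ : ℝ => f v + δ * f e) (𝓝 0) (𝓝 (f v)) := by
      simpa using (tendsto_const_nhds (x := f v)).add
        ((tendsto_id (x := 𝓝 (0 : ℝ))).mul_const (f e))
    exact (this.eventually_lt_const hlt).mono fun δ h => by simpa [hlin] using h.le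

theorem mem_extremePoints_of_injOn_of_isMaxOn {A : Set E} {l : E →ₗ[ℝ] ℝ} (hl : InjOn l A)
    {x : E} (hx : x ∈ A) (hmax : IsMaxOn l A x) : x ∈ A.extremePoints ℝ := by
  refine mem_extremePoints_iff_left.2 ⟨hx, fun x₁ hx₁ x₂ hx₂ ⟨a, b, ha, hb, hab, hxab⟩ => ?_⟩
  refine hl hx₁ hx (le_antisymm (hmax hx₁) ?_)
  have h := congrArg l hxab
  simp only [map_add, map_smul, smul_eq_mul] at h
  have h₂ : b * l x₂ ≤ b * l x := mul_le_mul_of_nonneg_left (hmax hx₂) hb.le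
  have : a * l x ≤ a * l x₁ := by linarith [congrArg (· * l x) hab]
  exact le_of_mul_le_mul_left this ha

theorem mem_extremePoints_of_injOn_of_isMinOn {A : Set E} {l : E →ₗ[ℝ] ℝ} (hl : InjOn l A)
    {x : E} (hx : x ∈ A) (hmin : IsMinOn l A x) : x ∈ A.extremePoints ℝ :=
  mem_extremePoints_of_injOn_of_isMaxOn (l := -l) (fun _ ha _ hb h => hl ha hb (neg_injective h))
    hx hmin.neg

theorem Convex.eq_segment_of_injOn {G : Set E} (hG : Convex ℝ G) {f : E →ₗ[ℝ] ℝ}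
    (hf : InjOn f G) {u w : E} (hu : u ∈ G) (hw : w ∈ G) (hmin : IsMinOn f G u)
    (hmax : IsMaxOn f G w) :
    G = segment ℝ u w := by
  refine Subset.antisymm (fun x hx => ?_) (hG.segment_subset hu hw)
  obtain ⟨y, hy, hfy⟩ : f x ∈ f '' segment ℝ u w := by
    rw [← LinearMap.coe_toAffineMap, image_segment, segment_eq_Icc (hmin hw)]
    exact ⟨hmin hx, hmax hx⟩
  rwa [hf hx (hG.segment_subset hu hw hy) hfy.symm]

end Module

section Topological

variable {E : Type*} [AddCommGroup E] [Module ℝ E] [TopologicalSpace E]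

theorem ContinuousLinearMap.convexHull_toExposed (l : StrongDual ℝ E) (A : Set E) :
    convexHull ℝ (l.toExposed A) = l.toExposed (convexHull ℝ A) := by
  refine Subset.antisymm ?_ fun x ⟨hx, hmax⟩ => ?_
  · rcases (l.toExposed A).eq_empty_or_nonempty with h | ⟨b, hb⟩
    · simp [h]
    have hA : convexHull ℝ A ⊆ {y | l y ≤ l b} :=
      convexHull_min hb.2 (convex_halfSpace_le l.toLinearMap.isLinear _)
    have hB : convexHull ℝ (l.toExposed A) ⊆ {y | l b ≤ l y} :=
      convexHull_min (fun a ha => ha.2 b hb.1) (convex_halfSpace_ge l.toLinearMap.isLinear _)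
    exact fun x hx =>
      ⟨convexHull_mono (fun a ha => ha.1) hx, fun y hy => (hA hy).trans (hB hx)⟩
  · have hmax' : ∀ a ∈ A, l a ≤ l x := fun a ha => hmax a (subset_convexHull ℝ A ha)
    refine convexHull_mono ?_ (mem_convexHull_setOf_eq_of_forall_le (l := l) hmax' hx rfl)
    exact fun a ha => ⟨ha.1, fun y hy => ha.2 ▸ hmax' y hy⟩

theorem IsExposed.convexHull {A B : Set E} (h : IsExposed ℝ A B) :
    IsExposed ℝ (convexHull ℝ A) (convexHull ℝ B) := by
  intro hne
  obtain ⟨l, rfl⟩ := h (convexHull_nonempty_iff.1 hne)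
  exact ⟨l, l.convexHull_toExposed A⟩

theorem IsExposed.trans_of_finite {A B C : Set E} (hA : A.Finite) (hAB : IsExposed ℝ A B)
    (hBC : IsExposed ℝ B C) : IsExposed ℝ A C := by
  rintro ⟨c, hc⟩
  obtain ⟨l₁, rfl⟩ := hBC ⟨c, hc⟩
  obtain ⟨l₀, rfl⟩ := hAB ⟨c, hc.1⟩
  -- for small `ε > 0`, `l₀ + ε • l₁` is still maximal only on `B` and, within `B`, only on `C`
  obtain ⟨ε, hε, hlt⟩ :=
    hA.exists_pos_forall_add_mul_lt (fun t => l₀ t) (fun t => l₁ t - l₁ c) (l₀ c)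
  have hB : ∀ t ∈ A, t ∈ l₀.toExposed A ↔ l₀ t = l₀ c := fun t ht =>
    ⟨fun h => le_antisymm (hc.1.2 t ht) (h.2 c hc.1.1), fun h => ⟨ht, fun y hy => h ▸ hc.1.2 y hy⟩⟩
  refine ⟨l₀ + ε • l₁, Subset.antisymm (fun x hx => ⟨hx.1.1, fun y hy => ?_⟩) fun x hx => ?_⟩
  · have hx₀ := (hB x hx.1.1).1 hx.1
    have hx₁ := le_antisymm (hc.2 x hx.1) (hx.2 c hc.1)
    simp only [add_apply, smul_apply, smul_eq_mul, hx₀, hx₁]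
    rcases (hc.1.2 y hy).lt_or_eq with hy₀ | hy₀
    · linarith [hlt y hy hy₀]
    · nlinarith [hc.2 y ((hB y hy).2 hy₀)]
  · have hmax := hx.2
    simp only [add_apply, smul_apply, smul_eq_mul] at hmax
    have hx₀ : l₀ x = l₀ c := by
      by_contra hne
      linarith [hlt x hx.1 ((hc.1.2 x hx.1).lt_of_ne hne), hmax c hc.1.1]
    refine ⟨(hB x hx.1).2 hx₀, fun y hy => ?_⟩
    have := hmax y hy.1
    rw [(hB y hy.1).1 hy, hx₀] at this
    nlinarith

theorem IsCompact.exists_eq_segment_of_injOn {G : Set E} (hGc : IsCompact G) (hG : Convex ℝ G)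
    (hne : G.Nonempty) {f : E →ₗ[ℝ] ℝ} (hfc : Continuous f) (hf : InjOn f G) :
    ∃ u ∈ G.extremePoints ℝ, ∃ w ∈ G.extremePoints ℝ,
      G = segment ℝ u w ∧ IsMinOn f G u ∧ IsMaxOn f G w := by
  obtain ⟨u, hu, hmin⟩ := hGc.exists_isMinOn hne hfc.continuousOn
  obtain ⟨w, hw, hmax⟩ := hGc.exists_isMaxOn hne hfc.continuousOn
  exact ⟨u, mem_extremePoints_of_injOn_of_isMinOn hf hu hmin,
    w, mem_extremePoints_of_injOn_of_isMaxOn hf hw hmax,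
    hG.eq_segment_of_injOn hf hu hw hmin hmax, hmin, hmax⟩

end Topological

section FiniteDimensional

variable {E : Type*} [NormedAddCommGroup E] [NormedSpace ℝ E] [FiniteDimensional ℝ E]

theorem Convex.interior_preimage_vectorSpan_nonempty {C : Set E} (hC : Convex ℝ C) {v : E}
    (hv : v ∈ C) : (interior ((vectorSpan ℝ C).subtype ⁻¹' ((v + ·) ⁻¹' C))).Nonempty := by
  set D := vectorSpan ℝ C
  set K : Set D := D.subtype ⁻¹' ((v + ·) ⁻¹' C)
  have himage : D.subtype.toAffineMap '' K = -v +ᵥ C := by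
    ext x
    simp only [mem_image, mem_vadd_set, vadd_eq_add]
    constructor
    · rintro ⟨e, he, rfl⟩
      exact ⟨_, he, by simp⟩
    · rintro ⟨y, hy, rfl⟩
      refine ⟨⟨-v + y, ?_⟩, by simpa [K] using hy, rfl⟩
      simpa [neg_add_eq_sub] using vsub_mem_vectorSpan ℝ hy hv
  have hspan : vectorSpan ℝ K = ⊤ := by
    apply Submodule.map_injective_of_injective D.injective_subtype
    rw [Submodule.map_subtype_top, ← LinearMap.toAffineMap_linear D.subtype,
      AffineMap.map_vectorSpan, himage, vectorSpan_vadd]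
  have hK : Convex ℝ K := (hC.translate_preimage_right v).linear_preimage D.subtype
  rw [hK.interior_nonempty_iff_affineSpan_eq_top,
    AffineSubspace.affineSpan_eq_top_iff_vectorSpan_eq_top_of_nonempty _ _ _
      ⟨0, by simpa [K] using hv⟩]
  exact hspan

/-- The first alternative says that `v` lies in the relative interior of `C`, in algebraic form. -/
theorem Convex.eventually_add_smul_mem_or_exists_lt {C : Set E} (hC : Convex ℝ C) {v : E}
    (hv : v ∈ C) :
    (∀ e ∈ vectorSpan ℝ C, ∀ᶠ δ in 𝓝 (0 : ℝ), v + δ • e ∈ C) ∨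
      ∃ l : StrongDual ℝ E, (∀ x ∈ C, l x ≤ l v) ∧ ∃ x ∈ C, l x < l v := by
  set D := vectorSpan ℝ C with hD
  set K : Set D := D.subtype ⁻¹' ((v + ·) ⁻¹' C)
  by_cases h0 : (0 : D) ∈ interior K
  · left
    intro e he
    have : Tendsto (fun δ : ℝ => δ • (⟨e, he⟩ : D)) (𝓝 0) (𝓝 0) := by
      simpa using (tendsto_id (x := 𝓝 (0 : ℝ))).smul_const (⟨e, he⟩ : D)
    exact this.eventually (mem_interior_iff_mem_nhds.1 h0)
  right
  obtain ⟨g, hg0, hg⟩ := geometric_hahn_banach_of_nonempty_interior_point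
    ((hC.translate_preimage_right v).linear_preimage D.subtype) h0
    (hC.interior_preimage_vectorSpan_nonempty hv)
  obtain ⟨l, hl, -⟩ := exists_extension_norm_eq D g
  have hle : ∀ x ∈ C, l x ≤ l v := fun x hx => by
    have := hg ⟨x - v, vsub_mem_vectorSpan ℝ hx hv⟩ (by simpa [K] using hx)
    rwa [map_zero, ← hl, map_sub, sub_nonpos] at this
  refine ⟨l, hle, ?_⟩
  by_contra! hge
  have hker : D ≤ LinearMap.ker (l : E →ₗ[ℝ] ℝ) := by
    rw [hD, vectorSpan_def, Submodule.span_le]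
    rintro _ ⟨x, hx, y, hy, rfl⟩
    simp [le_antisymm (hle x hx) (hge x hx), le_antisymm (hle y hy) (hge y hy)]
  exact hg0 (ContinuousLinearMap.ext fun e => by simpa [← hl] using hker e.2)

theorem exists_isExposed_eventually_add_smul_mem {R : Set E} (hR : R.Finite) {v : E}
    (hv : v ∈ convexHull ℝ R) :
    ∃ T, IsExposed ℝ R T ∧ v ∈ convexHull ℝ T ∧
      ∀ e ∈ vectorSpan ℝ (convexHull ℝ T), ∀ᶠ δ in 𝓝 (0 : ℝ), v + δ • e ∈ convexHull ℝ T := by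
  have hfin : {T | IsExposed ℝ R T ∧ v ∈ convexHull ℝ T}.Finite :=
    hR.finite_subsets.subset fun T hT => hT.1.subset
  obtain ⟨T, ⟨hRT, hvT⟩, hmin⟩ := hfin.exists_minimal ⟨R, IsExposed.refl R, hv⟩
  refine ⟨T, hRT, hvT, ((convex_convexHull ℝ T).eventually_add_smul_mem_or_exists_lt
    hvT).resolve_right ?_⟩
  rintro ⟨l, hle, x, hx, hlx⟩
  have hvT' : v ∈ convexHull ℝ (l.toExposed T) := by
    rw [l.convexHull_toExposed]; exact ⟨hvT, hle⟩
  have hTT' : T ⊆ l.toExposed T :=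
    hmin ⟨hRT.trans_of_finite hR ContinuousLinearMap.toExposed.isExposed, hvT'⟩ fun t ht => ht.1
  have hx' : x ∈ l.toExposed (convexHull ℝ T) :=
    l.convexHull_toExposed T ▸ convexHull_mono hTT' hx
  exact (hx'.2 v hvT).not_gt hlx

end FiniteDimensional

/-- New vertices lie on edges of `P`: let `P = conv S` be a polytope (`S` finite),
`f` a linear functional and `c` such that no extreme point `u` of `P` has `f u = c`,
and let `P' = P ∩ {x : f x ≤ c}`.  Then every extreme point `v` of `P'` that is not an
extreme point of `P` lies on an edge of `P`: there are extreme points `u, w` of `P` with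
`f u < c < f w`, the segment `[u, w]` is an exposed face of `P` of affine dimension 1
(an edge), `v` lies in the open segment between `u` and `w`, and `f v = c`. -/
theorem new_vertices_on_edges (d : ℕ) (S : Set (Fin d → ℝ)) (hS : S.Finite)
    (f : (Fin d → ℝ) →ₗ[ℝ] ℝ) (c : ℝ)
    (hgen : ∀ u ∈ (convexHull ℝ S).extremePoints ℝ, f u ≠ c)
    (v : Fin d → ℝ)
    (hv : v ∈ (convexHull ℝ S ∩ {x | f x ≤ c}).extremePoints ℝ)
    (hnew : v ∉ (convexHull ℝ S).extremePoints ℝ) :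
    ∃ u w : Fin d → ℝ,
      u ∈ (convexHull ℝ S).extremePoints ℝ ∧ w ∈ (convexHull ℝ S).extremePoints ℝ ∧
      f u < c ∧ c < f w ∧
      IsExposed ℝ (convexHull ℝ S) (segment ℝ u w) ∧ affDim (segment ℝ u w) = 1 ∧
      v ∈ openSegment ℝ u w ∧ f v = c := by
  obtain ⟨⟨hvP, hvc⟩, -⟩ := id hv
  obtain ⟨T, hST, hvT, hcore⟩ := exists_isExposed_eventually_add_smul_mem hS hvP
  set G := convexHull ℝ T
  have hGP : IsExposed ℝ (convexHull ℝ S) G := hST.convexHull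
  have hdir {x y : Fin d → ℝ} (hx : x ∈ G) (hy : y ∈ G) (h : f (x - y) = 0 ∨ f v < c) : x = y :=
    sub_eq_zero.1 <| eq_zero_of_mem_extremePoints_inter_halfSpace hv hGP.subset
      (hcore _ (vsub_mem_vectorSpan ℝ hx hy)) h
  have hinj : InjOn f G := fun x hx y hy hxy => hdir hx hy (.inl (by simp [hxy]))
  obtain ⟨u, huG, w, hwG, hseg, hmin, hmax⟩ :=
    (Set.Finite.isCompact_convexHull ℝ (hS.subset hST.subset)).exists_eq_segment_of_injOn
      (convex_convexHull ℝ T) ⟨v, hvT⟩ f.continuous_of_finiteDimensional hinj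
  have huP := hGP.isExtreme.extremePoints_subset_extremePoints huG
  have hwP := hGP.isExtreme.extremePoints_subset_extremePoints hwG
  have huw : u ≠ w := by
    rintro rfl
    have hvu : v ∈ ({u} : Set (Fin d → ℝ)) := segment_same ℝ u ▸ hseg ▸ hvT
    exact hnew (mem_singleton_iff.1 hvu ▸ huP)
  have hfv : f v = c := (show f v ≤ c from hvc).eq_or_lt.resolve_right fun hlt =>
    huw (hdir (extremePoints_subset huG) (extremePoints_subset hwG) (.inr hlt))
  have hfu : f u < c := lt_of_le_of_ne ((hmin hvT).trans hvc) (hgen u huP)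
  have hfw : c < f w := lt_of_le_of_ne (hfv ▸ hmax hvT) (hgen w hwP).symm
  refine ⟨u, w, huP, hwP, hfu, hfw, hseg ▸ hGP, ?_, ?_, hfv⟩
  · rw [affDim, vectorSpan_segment, finrank_span_singleton (vsub_ne_zero.2 huw.symm)]
  · exact mem_openSegment_of_ne_left_right (by rintro rfl; exact hfu.ne hfv)
      (by rintro rfl; exact hfw.ne' hfv) (hseg ▸ hvT)
end

section
/- (Vertices of the new facet correspond bijectively to crossing edges.) Let P ⊆ ℝ^d be a polytope, f : ℝ^d → ℝ a linear functional and c ∈ ℝ such that no extreme point u of P satisfies f(u) = c, and such that some extreme points of P satisfy f < c and some satisfy f > c. Then: (i) for every edge [u,w] of P with f(u) < c < f(w) there is exactly one point v ∈ [u,w] with f(v) = c, and this v is an extreme point of the polytope P ∩ {x : f(x) = c}; (ii) conversely, every extreme point of P ∩ {x : f(x) = c} arises in this way from a unique such edge. Hence the number of extreme points of P ∩ {x : f(x) = c} equals the number of edges of P with one endpoint on each side of the hyperplane. -/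
open Set

/-- `CrossingEdge P f c u w` says that `u, w` are extreme points of `P` spanning an edge
of `P` (an exposed face of affine dimension 1) which crosses the hyperplane `f = c`,
with `f u < c < f w`. -/
def CrossingEdge {d : ℕ} (P : Set (Fin d → ℝ)) (f : (Fin d → ℝ) →ₗ[ℝ] ℝ) (c : ℝ)
    (u w : Fin d → ℝ) : Prop :=
  u ∈ P.extremePoints ℝ ∧ w ∈ P.extremePoints ℝ ∧ f u < c ∧ c < f w ∧
    IsExposed ℝ P (segment ℝ u w) ∧ affDim (segment ℝ u w) = 1


/-!
A vertex `v` of `Q = P ∩ {f = c}` is not a vertex of `P`, so `P` extends on both sides of `v` along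
some direction `z`, which may be normalised to `f z = 1`. Every direction `ξ` along which `P`
extends on both sides of `v` is then `f ξ • z`: otherwise `ξ - f ξ • z` would be such a direction
inside the hyperplane, and `v` would not be a vertex of `Q`. Hence the chord `[u, w]` of `P`
through `v` in direction `z` is an extreme subset of `P`, with `f u < c < f w`. As `P` is a
polytope, a functional strongly separating the hull of the generators off `[u, w]` from the line
of `[u, w]` exposes `[u, w]`, so it is an edge. Conversely, a crossing edge meets the hyperplane in
a single point, which is a vertex of `Q` because the edge is a face of `P`; and two crossing edges
through the same point coincide, since each is a face of `P` containing an interior point of the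
other.
-/

open Filter Topology

theorem exists_mem_Icc_lineMap_eq_zero (s : ℝ) {t₀ t₁ : ℝ} (ht₀ : t₀ < 0) (ht₁ : 0 < t₁) :
    ∃ e ∈ Icc t₀ t₁, ∃ μ ∈ Ico (0 : ℝ) 1, AffineMap.lineMap s e μ = 0 := by
  rcases le_or_gt s 0 with hs0 | hs0
  · refine ⟨t₁, right_mem_Icc.2 (ht₀.trans ht₁).le, -s / (t₁ - s),
      ⟨div_nonneg (by linarith) (by linarith), (div_lt_one (by linarith)).2 (by linarith)⟩, ?_⟩
    rw [AffineMap.lineMap_apply_ring', div_mul_cancel₀ _ (by linarith)]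
    ring
  · refine ⟨t₀, left_mem_Icc.2 (ht₀.trans ht₁).le, s / (s - t₀),
      ⟨div_nonneg (by linarith) (by linarith), (div_lt_one (by linarith)).2 (by linarith)⟩, ?_⟩
    rw [AffineMap.lineMap_apply_ring', ← neg_sub s t₀, mul_neg, div_mul_cancel₀ _ (by linarith)]
    ring

theorem exists_Icc_eq_of_mem_nhds_zero {I : Set ℝ} (hconv : Convex ℝ I) (hcpt : IsCompact I)
    (h0 : I ∈ 𝓝 0) : ∃ t₀ < 0, ∃ t₁ > 0, I = Icc t₀ t₁ := by
  obtain ⟨l, u, ⟨hl, hu⟩, hsub⟩ := mem_nhds_iff_exists_Ioo_subset.1 h0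
  refine ⟨sInf I, (csInf_le hcpt.bddBelow (hsub ⟨by linarith, by linarith⟩ : l / 2 ∈ I)).trans_lt
      (by linarith), sSup I, lt_of_lt_of_le (by linarith)
      (le_csSup hcpt.bddAbove (hsub ⟨by linarith, by linarith⟩ : u / 2 ∈ I)),
    eq_Icc_of_connected_compact ⟨⟨0, mem_of_mem_nhds h0⟩, hconv.isPreconnected⟩ hcpt⟩

section Convex

variable {E : Type*} [AddCommGroup E] [Module ℝ E]

theorem LinearMap.apply_lineMap_eq_add_mul (g : E →ₗ[ℝ] ℝ) (x y : E) (t : ℝ) :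
    g (AffineMap.lineMap x y t) = g x + t * (g y - g x) := by
  simp only [AffineMap.lineMap_apply_module', map_add, map_smul, map_sub, smul_eq_mul]
  ring

theorem existsUnique_mem_segment_apply_eq (f : E →ₗ[ℝ] ℝ) {u w : E} {c : ℝ}
    (hu : f u < c) (hw : c < f w) : ∃! v, v ∈ segment ℝ u w ∧ f v = c := by
  have hd : 0 < f w - f u := by linarith
  simp only [segment_eq_image_lineMap]
  refine ⟨AffineMap.lineMap u w ((c - f u) / (f w - f u)), ⟨⟨_, ⟨?_, ?_⟩, rfl⟩, ?_⟩, ?_⟩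
  · exact div_nonneg (by linarith) hd.le
  · exact (div_le_one hd).2 (by linarith)
  · rw [f.apply_lineMap_eq_add_mul, div_mul_cancel₀ _ hd.ne']
    ring
  · rintro _ ⟨⟨t, -, rfl⟩, ht⟩
    rw [f.apply_lineMap_eq_add_mul] at ht
    congr 1
    rw [eq_div_iff hd.ne']
    linarith

theorem AffineSubspace.apply_eq_of_forall_lt (A : AffineSubspace ℝ E) (g : E →ₗ[ℝ] ℝ) {β : ℝ}
    (h : ∀ x ∈ A, β < g x) {x y : E} (hx : x ∈ A) (hy : y ∈ A) : g x = g y := by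
  by_contra hne
  have hd : g y - g x ≠ 0 := sub_ne_zero.2 (Ne.symm hne)
  have := h _ (AffineMap.lineMap_mem ((β - g x) / (g y - g x)) hx hy)
  rw [g.apply_lineMap_eq_add_mul, div_mul_cancel₀ _ hd] at this
  linarith

theorem convex_setOf_lt_union {F : Set E} (g : E →ₗ[ℝ] ℝ) {γ : ℝ} (hF : Convex ℝ F)
    (hgF : ∀ x ∈ F, g x = γ) : Convex ℝ ({x | g x < γ} ∪ F) := by
  rw [convex_iff_forall_pos]
  intro x hx y hy a b ha hb hab
  by_cases hxy : x ∈ F ∧ y ∈ F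
  · exact Or.inr (hF hxy.1 hxy.2 ha.le hb.le hab)
  left
  have hle : ∀ p ∈ {x | g x < γ} ∪ F, g p ≤ γ := by
    rintro p (hp | hp)
    exacts [le_of_lt hp, (hgF p hp).le]
  have hlt : g x < γ ∨ g y < γ := by
    rcases hx with hx | hx <;> rcases hy with hy | hy <;> tauto
  show g (a • x + b • y) < γ
  rw [map_add, map_smul, map_smul, smul_eq_mul, smul_eq_mul]
  calc a * g x + b * g y < a * γ + b * γ := by
        rcases hlt with hlt | hlt
        · exact add_lt_add_of_lt_of_le (mul_lt_mul_of_pos_left hlt ha)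
            (mul_le_mul_of_nonneg_left (hle y hy) hb.le)
        · exact add_lt_add_of_le_of_lt (mul_le_mul_of_nonneg_left (hle x hx) ha.le)
            (mul_lt_mul_of_pos_left hlt hb)
    _ = γ := by rw [← add_mul, hab, one_mul]

theorem IsExtreme.inter_inter {A B : Set E} (h : IsExtreme ℝ A B) (C : Set E) :
    IsExtreme ℝ (A ∩ C) (B ∩ C) :=
  ⟨inter_subset_inter_left C h.subset, fun _ hx _ hy _ hz hzxy =>
    ⟨h.left_mem_of_mem_openSegment hx.1 hy.1 hz.1 hzxy, hx.2⟩⟩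

theorem eq_or_eq_of_mem_extremePoints_of_mem_segment {P : Set E} {u w p : E}
    (hsub : segment ℝ u w ⊆ P) (hp : p ∈ P.extremePoints ℝ) (hpuw : p ∈ segment ℝ u w) :
    p = u ∨ p = w := by
  have := inter_extremePoints_subset_extremePoints_of_subset hsub ⟨hpuw, hp⟩
  rw [← convexHull_pair] at this
  simpa using extremePoints_convexHull_subset this

theorem AffineMap.mem_extremePoints_image_of_injective {F : Type*} [AddCommGroup F]
    [Module ℝ F] (L : E →ᵃ[ℝ] F) (hL : Function.Injective L) {K : Set E} {x : E}
    (hx : x ∈ K.extremePoints ℝ) : L x ∈ (L '' K).extremePoints ℝ := by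
  refine ⟨mem_image_of_mem L hx.1, ?_⟩
  rintro _ ⟨a, ha, rfl⟩ _ ⟨b, hb, rfl⟩ hxab
  rw [← image_openSegment, hL.mem_set_image] at hxab
  rw [hx.2 ha hb hxab]

theorem left_mem_extremePoints_segment (u w : E) : u ∈ (segment ℝ u w).extremePoints ℝ := by
  rcases eq_or_ne u w with rfl | huw
  · simp
  have h := (AffineMap.lineMap u w).mem_extremePoints_image_of_injective
    (AffineMap.lineMap_injective ℝ huw) (x := (0 : ℝ)) (K := Icc 0 1) (by simp)
  rwa [AffineMap.lineMap_apply_zero, ← segment_eq_image_lineMap] at h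

theorem IsExtreme.endpoints_mem_extremePoints {P : Set E} {u w : E}
    (h : IsExtreme ℝ P (segment ℝ u w)) : u ∈ P.extremePoints ℝ ∧ w ∈ P.extremePoints ℝ :=
  ⟨h.extremePoints_subset_extremePoints (left_mem_extremePoints_segment u w),
    h.extremePoints_subset_extremePoints (segment_symm ℝ w u ▸ left_mem_extremePoints_segment w u)⟩

theorem segment_add_smul_eq_image (v z : E) {t₀ t₁ : ℝ} (h : t₀ ≤ t₁) :
    segment ℝ (v + t₀ • z) (v + t₁ • z) = (fun t : ℝ => v + t • z) '' Icc t₀ t₁ := by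
  have hL : (fun t : ℝ => v + t • z) = AffineMap.lineMap v (v + z) := by
    ext t
    simp [AffineMap.lineMap_apply_module', add_comm]
  rw [← segment_eq_Icc h, hL, image_segment]
  simp [AffineMap.lineMap_apply_module', add_comm]

/-- For convex `P`, the direction space of the smallest face of `P` containing `v`. -/
def twoSidedDirections (P : Set E) (v : E) : Set E :=
  {ξ | ∀ᶠ t in 𝓝 (0 : ℝ), v + t • ξ ∈ P}

variable {P : Set E} {v ξ ζ : E}

theorem smul_mem_twoSidedDirections (a : ℝ) (hξ : ξ ∈ twoSidedDirections P v) :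
    a • ξ ∈ twoSidedDirections P v := by
  have : Tendsto (fun t : ℝ => t * a) (𝓝 0) (𝓝 0) := by
    simpa using (tendsto_id (x := 𝓝 (0 : ℝ))).mul_const a
  filter_upwards [this.eventually hξ] with t ht
  rwa [smul_smul]

theorem add_mem_twoSidedDirections (hP : Convex ℝ P) (hξ : ξ ∈ twoSidedDirections P v)
    (hζ : ζ ∈ twoSidedDirections P v) : ξ + ζ ∈ twoSidedDirections P v := by
  filter_upwards [smul_mem_twoSidedDirections 2 hξ, smul_mem_twoSidedDirections 2 hζ]
    with t hξt hζt
  convert hP hξt hζt (by norm_num : (0 : ℝ) ≤ 1 / 2) (by norm_num : (0 : ℝ) ≤ 1 / 2)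
    (by norm_num) using 1
  module

theorem sub_mem_twoSidedDirections_of_mem_openSegment (hP : Convex ℝ P) {p q : E}
    (hp : p ∈ P) (hq : q ∈ P) (hv : v ∈ openSegment ℝ p q) :
    p - v ∈ twoSidedDirections P v := by
  obtain ⟨a, b, ha, hb, hab, hv⟩ := hv
  have hline : {t : ℝ | v + t • (p - v) ∈ P} = AffineMap.lineMap v p ⁻¹' P := by
    ext t
    simp [AffineMap.lineMap_apply_module', add_comm]
  have hconv : Convex ℝ {t : ℝ | v + t • (p - v) ∈ P} := hline ▸ hP.affine_preimage _
  have hq' : v + (-(a / b)) • (p - v) ∈ P := by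
    convert hq using 1
    obtain rfl : b = 1 - a := by linarith
    rw [← hv]
    match_scalars <;> field_simp <;> ring
  have hp' : v + (1 : ℝ) • (p - v) ∈ P := by
    convert hp using 1
    module
  exact mem_of_superset (Icc_mem_nhds (by simp [ha, hb]) one_pos) (hconv.ordConnected.out hq' hp')

theorem mem_twoSidedDirections_lineMap (hP : Convex ℝ P) {x e : E} {μ : ℝ} (he : e ∈ P)
    (hμ : μ ∈ Ico (0 : ℝ) 1) (hξ : ξ ∈ twoSidedDirections P x) :
    ξ ∈ twoSidedDirections P (AffineMap.lineMap x e μ) := by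
  have hμ' : 0 < 1 - μ := by linarith [hμ.2]
  have : Tendsto (fun t : ℝ => t / (1 - μ)) (𝓝 0) (𝓝 0) := by
    simpa using (tendsto_id (x := 𝓝 (0 : ℝ))).div_const (1 - μ)
  filter_upwards [this.eventually hξ] with t ht
  convert hP ht he hμ'.le hμ.1 (by ring) using 1
  rw [AffineMap.lineMap_apply_module]
  match_scalars <;> field_simp

theorem eq_zero_of_mem_twoSidedDirections {A : Set E} (hv : v ∈ A.extremePoints ℝ)
    (hξ : ξ ∈ twoSidedDirections A v) : ξ = 0 := by
  obtain ⟨t, ⟨hvt, hvt'⟩, ht⟩ :=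
    (((hξ.and (smul_mem_twoSidedDirections (-1) hξ)).filter_mono nhdsWithin_le_nhds).and
      (self_mem_nhdsWithin (s := Ioi (0 : ℝ)))).exists
  have hvmid : v ∈ openSegment ℝ (v + t • ξ) (v + t • (-1 : ℝ) • ξ) :=
    ⟨1 / 2, 1 / 2, by norm_num, by norm_num, by norm_num, by module⟩
  have := hv.2 hvt hvt' hvmid
  rw [add_eq_left, smul_eq_zero] at this
  exact this.resolve_left (ne_of_gt ht)

section Hyperplane

variable {f : E →ₗ[ℝ] ℝ} {c t₀ t₁ : ℝ} {z : E}

theorem eq_zero_of_mem_twoSidedDirections_of_apply_eq_zero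
    (hv : v ∈ (P ∩ {x | f x = c}).extremePoints ℝ) (hξ : ξ ∈ twoSidedDirections P v)
    (hfξ : f ξ = 0) : ξ = 0 :=
  eq_zero_of_mem_twoSidedDirections hv <| hξ.mono fun t ht =>
    ⟨ht, by simp [show f v = c from hv.1.2, hfξ]⟩

theorem eq_apply_smul_of_mem_twoSidedDirections (hP : Convex ℝ P)
    (hv : v ∈ (P ∩ {x | f x = c}).extremePoints ℝ) (hξ : ξ ∈ twoSidedDirections P v)
    (hz : z ∈ twoSidedDirections P v) (hfz : f z = 1) : ξ = f ξ • z := by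
  have := eq_zero_of_mem_twoSidedDirections_of_apply_eq_zero hv
    (add_mem_twoSidedDirections hP hξ (smul_mem_twoSidedDirections (-f ξ) hz)) (by simp [hfz])
  rwa [neg_smul, ← sub_eq_add_neg, sub_eq_zero] at this

theorem exists_mem_twoSidedDirections_apply_eq_one (hP : Convex ℝ P)
    (hv : v ∈ (P ∩ {x | f x = c}).extremePoints ℝ) (hvP : v ∉ P.extremePoints ℝ) :
    ∃ z ∈ twoSidedDirections P v, f z = 1 := by
  obtain ⟨x₁, hx₁, x₂, hx₂, hv₁₂, hx₁v⟩ :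
      ∃ x₁ ∈ P, ∃ x₂ ∈ P, v ∈ openSegment ℝ x₁ x₂ ∧ x₁ ≠ v := by
    simpa [mem_extremePoints_iff_left, hv.1.1] using hvP
  have hξ := sub_mem_twoSidedDirections_of_mem_openSegment hP hx₁ hx₂ hv₁₂
  have hfξ : f (x₁ - v) ≠ 0 := fun h =>
    hx₁v (sub_eq_zero.1 (eq_zero_of_mem_twoSidedDirections_of_apply_eq_zero hv hξ h))
  refine ⟨(f (x₁ - v))⁻¹ • (x₁ - v), smul_mem_twoSidedDirections _ hξ, ?_⟩
  rw [map_smul, smul_eq_mul, inv_mul_cancel₀ hfξ]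

theorem isExtreme_segment_of_setOf_add_smul_mem_eq_Icc (hP : Convex ℝ P)
    (hv : v ∈ (P ∩ {x | f x = c}).extremePoints ℝ) (hz : z ∈ twoSidedDirections P v)
    (hfz : f z = 1) (hI : {t : ℝ | v + t • z ∈ P} = Icc t₀ t₁) (ht₀ : t₀ < 0) (ht₁ : 0 < t₁) :
    IsExtreme ℝ P (segment ℝ (v + t₀ • z) (v + t₁ • z)) := by
  have hmem : ∀ t, v + t • z ∈ P ↔ t ∈ Icc t₀ t₁ := fun t => by rw [← hI]; rfl
  rw [segment_add_smul_eq_image v z (ht₀.trans ht₁).le]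
  refine ⟨?_, ?_⟩
  · rintro _ ⟨t, ht, rfl⟩
    exact (hmem t).2 ht
  rintro p hp q hq _ ⟨s, -, rfl⟩ hpq
  dsimp only at hpq
  -- `v` lies on `[v + s • z, v + e • z)`, so it inherits the two-sided direction `p - (v + s • z)`.
  obtain ⟨e, he, μ, hμ, hμe⟩ := exists_mem_Icc_lineMap_eq_zero s ht₀ ht₁
  have hv' : AffineMap.lineMap (v + s • z) (v + e • z) μ = v := by
    rw [AffineMap.lineMap_apply_ring] at hμe
    calc AffineMap.lineMap (v + s • z) (v + e • z) μ = v + ((1 - μ) * s + μ * e) • z := by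
          rw [AffineMap.lineMap_apply_module]; module
      _ = v := by rw [hμe, zero_smul, add_zero]
  have hξ := mem_twoSidedDirections_lineMap hP ((hmem e).2 he) hμ
    (sub_mem_twoSidedDirections_of_mem_openSegment hP hp hq hpq)
  rw [hv'] at hξ
  have hp' : v + (s + f (p - (v + s • z))) • z = p := by
    rw [add_smul, ← add_assoc, ← eq_apply_smul_of_mem_twoSidedDirections hP hv hξ hz hfz]
    abel
  exact ⟨_, (hmem _).1 (by rw [hp']; exact hp), hp'⟩

end Hyperplane

end Convex

section Polytope

variable {E : Type*} [NormedAddCommGroup E] [NormedSpace ℝ E]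

theorem exists_Icc_eq_setOf_add_smul_mem {P : Set E} {v z : E} (hP : Convex ℝ P)
    (hPc : IsCompact P) (hz : z ≠ 0) (hzP : z ∈ twoSidedDirections P v) :
    ∃ t₀ < 0, ∃ t₁ > 0, {t : ℝ | v + t • z ∈ P} = Icc t₀ t₁ :=
  exists_Icc_eq_of_mem_nhds_zero
    (fun s hs t ht a b ha hb hab => by
      show v + (a • s + b • t) • z ∈ P
      convert hP hs ht ha hb hab using 1
      calc v + (a • s + b • t) • z = (a + b) • v + (a • s + b • t) • z := by rw [hab, one_smul]
        _ = a • (v + s • z) + b • (v + t • z) := by module)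
    (((Homeomorph.addLeft v).isClosedEmbedding.comp
      (isClosedEmbedding_smul_left hz)).isCompact_preimage hPc)
    hzP

theorem Set.Finite.isExposed_convexHull_of_isExtreme [FiniteDimensional ℝ E] {S F : Set E}
    (hS : S.Finite) (A : AffineSubspace ℝ E) (hF : IsExtreme ℝ (convexHull ℝ S) F)
    (hFc : Convex ℝ F) (hFA : F ⊆ A) (hA : convexHull ℝ S ∩ A ⊆ F) :
    IsExposed ℝ (convexHull ℝ S) F := by
  rintro ⟨x₀, hx₀⟩
  have hdisj : Disjoint (convexHull ℝ (S \ F)) (A : Set E) := by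
    refine Set.disjoint_left.2 fun x hxS hxA => ?_
    have hx : x ∈ convexHull ℝ S \ F := convexHull_min (sdiff_subset_sdiff_left
      (subset_convexHull ℝ S)) (hF.convex_sdiff (convex_convexHull ℝ S)) hxS
    exact hx.2 (hA ⟨hx.1, hxA⟩)
  obtain ⟨g, α, β, hgS, hαβ, hgA⟩ := geometric_hahn_banach_compact_closed
    (convex_convexHull ℝ _) (hS.sdiff.isCompact_convexHull ℝ) A.convex
    A.closed_of_finiteDimensional hdisj
  have hgF : ∀ x ∈ F, g x = g x₀ := fun x hx =>
    A.apply_eq_of_forall_lt (g : E →ₗ[ℝ] ℝ) hgA (hFA hx) (hFA hx₀)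
  have hP : convexHull ℝ S ⊆ {x | g x < g x₀} ∪ F := by
    refine convexHull_min (fun s hs => ?_) (convex_setOf_lt_union (g : E →ₗ[ℝ] ℝ) hFc hgF)
    by_cases hsF : s ∈ F
    · exact Or.inr hsF
    · exact Or.inl (show g s < g x₀ by
        linarith [hgS s (subset_convexHull ℝ _ ⟨hs, hsF⟩), hgA x₀ (hFA hx₀)])
  refine ⟨g, Set.ext fun x => ⟨fun hx => ⟨hF.subset hx, fun y hy => ?_⟩, fun ⟨hxP, hmax⟩ => ?_⟩⟩
  · rcases hP hy with hy | hy
    · exact (hgF x hx).symm ▸ le_of_lt hy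
    · rw [hgF x hx, hgF y hy]
  · rcases hP hxP with hx | hx
    · exact absurd (hmax x₀ (hF.subset hx₀)) (not_le.2 hx)
    · exact hx

end Polytope

section CrossingEdge

variable {d : ℕ} {P : Set (Fin d → ℝ)} {f : (Fin d → ℝ) →ₗ[ℝ] ℝ} {c : ℝ} {u w v : Fin d → ℝ}

theorem affDim_segment (h : u ≠ w) : affDim (segment ℝ u w) = 1 := by
  rw [affDim, ← convexHull_pair, ← direction_affineSpan, affineSpan_convexHull,
    direction_affineSpan, vectorSpan_pair]
  exact finrank_span_singleton (vsub_ne_zero.2 h)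

theorem CrossingEdge.isExtreme (h : CrossingEdge P f c u w) : IsExtreme ℝ P (segment ℝ u w) :=
  h.2.2.2.2.1.isExtreme

theorem CrossingEdge.existsUnique_mem_segment_apply_eq (h : CrossingEdge P f c u w) :
    ∃! v, v ∈ segment ℝ u w ∧ f v = c :=
  _root_.existsUnique_mem_segment_apply_eq f h.2.2.1 h.2.2.2.1

theorem CrossingEdge.mem_extremePoints_inter (h : CrossingEdge P f c u w)
    (hv : v ∈ segment ℝ u w) (hfv : f v = c) : v ∈ (P ∩ {x | f x = c}).extremePoints ℝ := by
  have hsingleton : segment ℝ u w ∩ {x | f x = c} = {v} :=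
    Set.eq_singleton_iff_unique_mem.2 ⟨⟨hv, hfv⟩, fun x hx =>
      h.existsUnique_mem_segment_apply_eq.unique hx ⟨hv, hfv⟩⟩
  have := h.isExtreme.inter_inter {x | f x = c}
  rwa [hsingleton, isExtreme_singleton] at this

theorem CrossingEdge.eq_of_mem_segment {u' w' : Fin d → ℝ} (h : CrossingEdge P f c u w)
    (h' : CrossingEdge P f c u' w') (hv : v ∈ segment ℝ u w) (hv' : v ∈ segment ℝ u' w')
    (hfv : f v = c) : u' = u ∧ w' = w := by
  obtain ⟨hu', hw', hfu', hfw', -⟩ := h'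
  have hvo : v ∈ openSegment ℝ u' w' := mem_openSegment_of_ne_left_right
    (by rintro rfl; linarith) (by rintro rfl; linarith) hv'
  have hu'uw := h.isExtreme.left_mem_of_mem_openSegment hu'.1 hw'.1 hv hvo
  have hw'uw := h.isExtreme.left_mem_of_mem_openSegment hw'.1 hu'.1 hv
    (openSegment_symm ℝ u' w' ▸ hvo)
  have hsub := h.isExtreme.subset
  refine ⟨(eq_or_eq_of_mem_extremePoints_of_mem_segment hsub hu' hu'uw).resolve_right ?_,
    (eq_or_eq_of_mem_extremePoints_of_mem_segment hsub hw' hw'uw).resolve_left ?_⟩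
  · rintro rfl; linarith [h.2.2.2.1]
  · rintro rfl; linarith [h.2.2.1]

theorem exists_crossingEdge_of_mem_extremePoints_inter {S : Set (Fin d → ℝ)} (hS : S.Finite)
    (hgen : ∀ u ∈ (convexHull ℝ S).extremePoints ℝ, f u ≠ c)
    (hv : v ∈ (convexHull ℝ S ∩ {x | f x = c}).extremePoints ℝ) :
    ∃ u w, CrossingEdge (convexHull ℝ S) f c u w ∧ v ∈ segment ℝ u w := by
  have hP := convex_convexHull ℝ S
  have hfv : f v = c := hv.1.2
  obtain ⟨z, hz, hfz⟩ := exists_mem_twoSidedDirections_apply_eq_one hP hv fun h => hgen v h hfv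
  have hz0 : z ≠ 0 := by rintro rfl; simp at hfz
  obtain ⟨t₀, ht₀, t₁, ht₁, hI⟩ :=
    exists_Icc_eq_setOf_add_smul_mem hP (hS.isCompact_convexHull ℝ) hz0 hz
  have hseg := segment_add_smul_eq_image v z (ht₀.trans ht₁).le
  have hext := isExtreme_segment_of_setOf_add_smul_mem_eq_Icc hP hv hz hfz hI ht₀ ht₁
  have hf : ∀ t : ℝ, f (v + t • z) = c + t := fun t => by simp [hfv, hfz]
  have hne : v + t₀ • z ≠ v + t₁ • z := fun h => by
    have := smul_left_injective ℝ hz0 (add_left_cancel h)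
    linarith
  have hline : ∀ t : ℝ, v + t • z ∈ AffineSubspace.mk' v (ℝ ∙ z) := fun t => by
    rw [AffineSubspace.mem_mk', vsub_eq_sub, add_sub_cancel_left]
    exact Submodule.smul_mem _ t (Submodule.mem_span_singleton_self z)
  have hexp : IsExposed ℝ (convexHull ℝ S) (segment ℝ (v + t₀ • z) (v + t₁ • z)) := by
    refine hS.isExposed_convexHull_of_isExtreme _ hext (convex_segment _ _)
      ((AffineSubspace.mk' v (ℝ ∙ z)).convex.segment_subset (hline t₀) (hline t₁)) ?_
    rintro x ⟨hxP, hxA⟩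
    rw [SetLike.mem_coe, AffineSubspace.mem_mk', vsub_eq_sub,
      Submodule.mem_span_singleton] at hxA
    obtain ⟨t, ht⟩ := hxA
    obtain rfl : x = v + t • z := by rw [ht]; abel
    exact hseg ▸ ⟨t, hI ▸ hxP, rfl⟩
  obtain ⟨hu, hw⟩ := hext.endpoints_mem_extremePoints
  refine ⟨_, _, ⟨hu, hw, by linarith [hf t₀], by linarith [hf t₁], hexp, affDim_segment hne⟩, ?_⟩
  exact hseg ▸ ⟨0, ⟨ht₀.le, ht₁.le⟩, by simp⟩

end CrossingEdge

theorem new_facet_vertices_biject_with_crossing_edges_general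
    (d : ℕ) (S : Set (Fin d → ℝ)) (hS : S.Finite)
    (f : (Fin d → ℝ) →ₗ[ℝ] ℝ) (c : ℝ)
    (hgen : ∀ u ∈ (convexHull ℝ S).extremePoints ℝ, f u ≠ c) :
    (∀ u w : Fin d → ℝ, CrossingEdge (convexHull ℝ S) f c u w →
      (∃! v : Fin d → ℝ, v ∈ segment ℝ u w ∧ f v = c) ∧
      ∀ v ∈ segment ℝ u w, f v = c →
        v ∈ (convexHull ℝ S ∩ {x | f x = c}).extremePoints ℝ) ∧
    (∀ v ∈ (convexHull ℝ S ∩ {x | f x = c}).extremePoints ℝ,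
      ∃ u w : Fin d → ℝ, CrossingEdge (convexHull ℝ S) f c u w ∧ v ∈ segment ℝ u w ∧
        ∀ u' w' : Fin d → ℝ, CrossingEdge (convexHull ℝ S) f c u' w' →
          v ∈ segment ℝ u' w' → s(u', w') = s(u, w)) ∧
    ((convexHull ℝ S ∩ {x | f x = c}).extremePoints ℝ).ncard =
      {e : Sym2 (Fin d → ℝ) |
        ∃ u w : Fin d → ℝ, CrossingEdge (convexHull ℝ S) f c u w ∧ e = s(u, w)}.ncard := by
  have hedge : ∀ v ∈ (convexHull ℝ S ∩ {x | f x = c}).extremePoints ℝ,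
      ∃ u w : Fin d → ℝ, CrossingEdge (convexHull ℝ S) f c u w ∧ v ∈ segment ℝ u w ∧
        ∀ u' w' : Fin d → ℝ, CrossingEdge (convexHull ℝ S) f c u' w' →
          v ∈ segment ℝ u' w' → s(u', w') = s(u, w) := fun v hv => by
    obtain ⟨u, w, h, hvuw⟩ := exists_crossingEdge_of_mem_extremePoints_inter hS hgen hv
    refine ⟨u, w, h, hvuw, fun u' w' h' hvuw' => ?_⟩
    obtain ⟨rfl, rfl⟩ := h.eq_of_mem_segment h' hvuw hvuw' hv.1.2
    rfl
  refine ⟨fun u w h => ⟨h.existsUnique_mem_segment_apply_eq,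
    fun v hv hfv => h.mem_extremePoints_inter hv hfv⟩, hedge, ?_⟩
  choose u w hcross hmem hsym using hedge
  refine Set.ncard_congr (fun v hv => s(u v hv, w v hv)) (fun v hv => ⟨_, _, hcross v hv, rfl⟩)
    (fun v₁ v₂ hv₁ hv₂ he => ?_) ?_
  · have hv₂uw : v₂ ∈ segment ℝ (u v₁ hv₁) (w v₁ hv₁) := by
      rcases Sym2.eq_iff.1 he with ⟨hu, hw⟩ | ⟨hu, hw⟩
      · exact hu ▸ hw ▸ hmem v₂ hv₂
      · exact hu ▸ hw ▸ segment_symm ℝ (u v₂ hv₂) (w v₂ hv₂) ▸ hmem v₂ hv₂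
    exact (hcross v₁ hv₁).existsUnique_mem_segment_apply_eq.unique ⟨hmem v₁ hv₁, hv₁.1.2⟩
      ⟨hv₂uw, hv₂.1.2⟩
  · rintro _ ⟨u₀, w₀, h, rfl⟩
    obtain ⟨v, ⟨hv, hfv⟩, -⟩ := h.existsUnique_mem_segment_apply_eq
    have hvext := h.mem_extremePoints_inter hv hfv
    exact ⟨v, hvext, (hsym v hvext u₀ w₀ h hv).symm⟩

/-- Vertices of the new facet correspond bijectively to crossing edges.  Let
`P = conv S` (`S` finite), and suppose no extreme point of `P` lies on the hyperplane
`f = c` while some extreme points satisfy `f < c` and some `f > c`.  Then: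
(i) each crossing edge `[u, w]` meets the hyperplane in exactly one point, and that
point is an extreme point of `P ∩ {x : f x = c}`;
(ii) every extreme point of `P ∩ {x : f x = c}` arises this way from a unique crossing
edge; hence
(iii) the number of extreme points of `P ∩ {x : f x = c}` equals the number of crossing
edges. -/
theorem new_facet_vertices_biject_with_crossing_edges
    (d : ℕ) (S : Set (Fin d → ℝ)) (hS : S.Finite)
    (f : (Fin d → ℝ) →ₗ[ℝ] ℝ) (c : ℝ)
    (hgen : ∀ u ∈ (convexHull ℝ S).extremePoints ℝ, f u ≠ c)
    (hbelow : ∃ u ∈ (convexHull ℝ S).extremePoints ℝ, f u < c)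
    (habove : ∃ w ∈ (convexHull ℝ S).extremePoints ℝ, c < f w) :
    (∀ u w : Fin d → ℝ, CrossingEdge (convexHull ℝ S) f c u w →
      (∃! v : Fin d → ℝ, v ∈ segment ℝ u w ∧ f v = c) ∧
      ∀ v ∈ segment ℝ u w, f v = c →
        v ∈ (convexHull ℝ S ∩ {x | f x = c}).extremePoints ℝ) ∧
    (∀ v ∈ (convexHull ℝ S ∩ {x | f x = c}).extremePoints ℝ,
      ∃ u w : Fin d → ℝ, CrossingEdge (convexHull ℝ S) f c u w ∧ v ∈ segment ℝ u w ∧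
        ∀ u' w' : Fin d → ℝ, CrossingEdge (convexHull ℝ S) f c u' w' →
          v ∈ segment ℝ u' w' → s(u', w') = s(u, w)) ∧
    ((convexHull ℝ S ∩ {x | f x = c}).extremePoints ℝ).ncard =
      {e : Sym2 (Fin d → ℝ) |
        ∃ u w : Fin d → ℝ, CrossingEdge (convexHull ℝ S) f c u w ∧ e = s(u, w)}.ncard :=
  new_facet_vertices_biject_with_crossing_edges_general d S hS f c hgen
end
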